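/- arXiv:2403.13156 — 6 statements merged into one kernel-verified Lean document; each statement's English description precedes it below -/
import Mathlib

section
/- Let k be a subfield of the real numbers and let A be a finite-dimensional associative unital k-algebra equipped with an involution τ that is positive-definite with respect to the trace. Then A is a semisimple ring. -/
set_option synthInstance.maxHeartbeats 1000000
set_option maxHeartbeats 1000000

/-- Let `k` be a subfield of the real numbers and let `A` be a
finite-dimensional associative unital `k`-algebra equipped with an involution `τ`
that is positive-definite with respect to the trace.  Then `A` is a semisimple ring. -/
theorem stmt_0 (k : Subfield ℝ) (A : Type*) [Ring A] [Algebra k A]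
    [FiniteDimensional k A]
    (τ : A →ₗ[k] A)
    (hmul : ∀ a b : A, τ (a * b) = τ b * τ a)
    (hinv : ∀ a : A, τ (τ a) = a)
    (hpos : ∀ a : A, a ≠ 0 →
      (0 : ℝ) < (LinearMap.trace k A (LinearMap.mulLeft k (a * τ a)) : ℝ)) :
    IsSemisimpleRing A := by
  classical
  -- the trace of left multiplication, as a linear functional
  set t : A →ₗ[k] k := (LinearMap.trace k A).comp (LinearMap.mul k A) with ht
  have tdef : ∀ x : A, t x = LinearMap.trace k A (LinearMap.mulLeft k x) := fun _ => rfl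
  -- cyclicity
  have tcyc : ∀ x y : A, t (x * y) = t (y * x) := by
    intro x y
    have h1 : LinearMap.mulLeft k (x * y) = LinearMap.mulLeft k x * LinearMap.mulLeft k y :=
      LinearMap.mulLeft_mul k A x y
    have h2 : LinearMap.mulLeft k (y * x) = LinearMap.mulLeft k y * LinearMap.mulLeft k x :=
      LinearMap.mulLeft_mul k A y x
    rw [tdef, tdef, h1, h2, LinearMap.trace_mul_comm]
  -- the symmetric bilinear form
  set B : LinearMap.BilinForm k A :=
    LinearMap.mk₂ k (fun a b => t (a * τ b) + t (b * τ a))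
      (by intro a a' b; simp [add_mul, mul_add, map_add]; ring)
      (by intro c a b; simp [smul_mul_assoc, mul_smul_comm, map_smul, smul_add, mul_add])
      (by intro a b b'; simp [add_mul, mul_add, map_add]; ring)
      (by intro c a b; simp [smul_mul_assoc, mul_smul_comm, map_smul, smul_add, mul_add]) with hB
  have Bapp : ∀ a b : A, B a b = t (a * τ b) + t (b * τ a) := fun _ _ => rfl
  have Bsymm : B.IsRefl := by
    intro a b h
    rw [Bapp] at h ⊢
    rw [add_comm]; exact h
  -- positivity
  have Bpos : ∀ a : A, a ≠ 0 → B a a ≠ 0 := by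
    intro a ha h0
    have hp := hpos a ha
    rw [Bapp] at h0
    have : ((t (a * τ a) + t (a * τ a) : k) : ℝ) = 0 := by rw [h0]; simp
    push_cast at this
    rw [← tdef] at hp
    linarith
  -- key identity
  have Bkey : ∀ c a b : A, B a (c * b) = B (τ c * a) b := by
    intro c a b
    rw [Bapp, Bapp, hmul, hmul, hinv]
    congr 1
    · rw [← mul_assoc, tcyc (a * τ b) (τ c), ← mul_assoc]
    · rw [mul_assoc, tcyc c (b * τ a), mul_assoc]
  rw [IsSemisimpleRing]
  refine (fun h : ComplementedLattice (Submodule A A) => { toComplementedLattice := h }) ⟨?_⟩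
  intro W
  set W' : Submodule k A := W.restrictScalars k with hW'
  -- restriction to W' is nondegenerate
  have hres : (B.restrict W').Nondegenerate := by
    refine ⟨?_, ?_⟩
    all_goals
      rintro ⟨x, hx⟩ h
      have hxx := h ⟨x, hx⟩
      simp only [LinearMap.BilinForm.restrict_apply] at hxx
      ext
      by_contra hx0
      exact Bpos x hx0 hxx
  have hcompl := LinearMap.BilinForm.isCompl_orthogonal_of_restrict_nondegenerate Bsymm hres
  -- the orthogonal complement as an A-submodule
  set O : Submodule A A :=
    { carrier := (B.orthogonal W' : Set A)
      add_mem' := fun ha hb => (B.orthogonal W').add_mem ha hb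
      zero_mem' := (B.orthogonal W').zero_mem
      smul_mem' := by
        intro c x hx
        have hx0 : x ∈ B.orthogonal W' := hx
        show c • x ∈ B.orthogonal W'
        rw [smul_eq_mul]
        rw [LinearMap.BilinForm.mem_orthogonal_iff] at hx0 ⊢
        intro n hn
        have : B n (c * x) = B (τ c * n) x := Bkey c n x
        have hn' : τ c * n ∈ W' := by
          have := W.smul_mem (τ c) hn
          exact this
        have hx' := hx0 (τ c * n) hn'
        simpa [LinearMap.BilinForm.IsOrtho, smul_eq_mul, this] using hx' } with hO
  refine ⟨O, ?_, ?_⟩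
  · rw [Submodule.disjoint_def]
    intro x hxW hxO
    have := hcompl.disjoint
    rw [Submodule.disjoint_def] at this
    exact this x hxW hxO
  · rw [codisjoint_iff, eq_top_iff]
    intro x _
    have htop := hcompl.codisjoint
    rw [codisjoint_iff] at htop
    have : x ∈ W' ⊔ B.orthogonal W' := by rw [htop]; trivial
    obtain ⟨y, hy, z, hz, rfl⟩ := Submodule.mem_sup.mp this
    exact Submodule.add_mem_sup (by exact hy) (by exact hz)
end

section
/- Let k be a subfield of the real numbers and let A be a finite-dimensional associative unital k-algebra equipped with an involution τ that is positive-definite with respect to the trace. Then every two-sided ideal I of A satisfying x·τ(y) = 0 for all x, y ∈ I is the zero ideal; consequently, τ maps every minimal (atomic) two-sided ideal of A onto itself. -/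
/-- Let `k` be a subfield of ℝ and `A` a finite-dimensional
`k`-algebra with an involution `τ` that is positive-definite with respect to the
trace.  Then every two-sided ideal `I` of `A` satisfying `x * τ y = 0` for all
`x, y ∈ I` is the zero ideal; consequently `τ` maps every minimal (atomic)
two-sided ideal of `A` onto itself. -/
theorem stmt_1 (k : Subfield ℝ) (A : Type*) [Ring A] [Algebra k A]
    [FiniteDimensional k A]
    (τ : A →ₗ[k] A)
    (hmul : ∀ a b : A, τ (a * b) = τ b * τ a)
    (hinv : ∀ a : A, τ (τ a) = a)
    (hpos : ∀ a : A, a ≠ 0 →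
      (0 : ℝ) < (LinearMap.trace k A (LinearMap.mulLeft k (a * τ a)) : ℝ)) :
    (∀ I : TwoSidedIdeal A, (∀ x ∈ I, ∀ y ∈ I, x * τ y = 0) → I = ⊥) ∧
    (∀ I : TwoSidedIdeal A, IsAtom I → τ '' (I : Set A) = (I : Set A)) := by
  have part1 : ∀ I : TwoSidedIdeal A, (∀ x ∈ I, ∀ y ∈ I, x * τ y = 0) → I = ⊥ := by
    intro I h
    refine eq_bot_iff.2 fun a ha => ?_
    rw [TwoSidedIdeal.mem_bot]
    by_contra hne
    have h0 : a * τ a = 0 := h a ha a ha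
    have := hpos a hne
    rw [h0] at this
    simp at this
  refine ⟨part1, fun I hI => ?_⟩
  -- J = preimage of I under τ, i.e. τ '' I
  set J : TwoSidedIdeal A := TwoSidedIdeal.mk' {x | τ x ∈ I}
    (by simp) (fun {x y} hx hy => by simpa using I.add_mem hx hy)
    (fun {x} hx => by simpa using I.neg_mem hx)
    (fun {x y} hy => by simpa [hmul] using I.mul_mem_right _ _ hy)
    (fun {x y} hx => by simpa [hmul] using I.mul_mem_left _ _ hx) with hJ
  have memJ : ∀ x, x ∈ J ↔ τ x ∈ I := fun x => by
    rw [hJ, TwoSidedIdeal.mem_mk']; rfl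
  have himg : τ '' (I : Set A) = (J : Set A) := by
    ext x
    simp only [Set.mem_image, SetLike.mem_coe, memJ]
    constructor
    · rintro ⟨y, hy, rfl⟩; rwa [hinv]
    · intro hx; exact ⟨τ x, hx, hinv x⟩
  rw [himg]
  -- suffices J = I
  by_cases hle : I ≤ J
  · -- then τ '' I ⊆ I, hence equal
    have hsub : ∀ x ∈ I, τ x ∈ I := fun x hx => (memJ x).1 (hle hx)
    ext x
    simp only [SetLike.mem_coe, memJ]
    exact ⟨fun hx => by simpa [hinv] using hsub _ hx, fun hx => hsub x hx⟩
  · exfalso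
    have hlt : I ⊓ J < I := lt_of_le_of_ne inf_le_left (by
      intro h
      exact hle (h ▸ inf_le_right))
    have hbot : I ⊓ J = ⊥ := hI.2 _ hlt
    have : I = ⊥ := by
      apply part1
      intro x hx y hy
      have h1 : x * τ y ∈ I := I.mul_mem_right _ _ hx
      have h2 : x * τ y ∈ J := by
        rw [memJ, hmul, hinv]
        exact I.mul_mem_right _ _ hy
      have : x * τ y ∈ I ⊓ J := ⟨h1, h2⟩
      rw [hbot, TwoSidedIdeal.mem_bot] at this
      exact this
    exact hI.1 this
end

section
/- Let A be a finite-dimensional associative unital ℚ-algebra equipped with an involution τ that is positive-definite with respect to the trace, and let G be a finite subgroup of the group of units A^× such that τ(g) = g^{-1} for every g ∈ G. Define B = {x ∈ A : τ(g)·x·g = x for all g ∈ G}. Then B is a ℚ-subalgebra of A, τ maps B onto B, and the restriction of τ to B is an involution on B that is positive-definite with respect to the trace (i.e., for every nonzero x ∈ B, the trace of the ℚ-linear endomorphism of B given by left multiplication by x·τ(x) is strictly positive). -/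
open LinearMap Module

lemma aux_trace_pos {V : Type*} [AddCommGroup V] [Module ℚ V] [FiniteDimensional ℚ V]
    (γ : LinearMap.BilinForm ℚ V) (hsymm : γ.IsSymm)
    (hpd : ∀ v : V, v ≠ 0 → 0 < γ v v)
    (S T : V →ₗ[ℚ] V) (hST : ∀ v w, γ (T v) w = γ (S v) (S w))
    (hS : S ≠ 0) : 0 < LinearMap.trace ℚ V T := by
  obtain ⟨b, hb⟩ := LinearMap.BilinForm.exists_orthogonal_basis (LinearMap.BilinForm.isSymm_iff.mp hsymm)
  rw [LinearMap.trace_eq_matrix_trace ℚ b T, Matrix.trace]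
  have key : ∀ i, Matrix.diag (LinearMap.toMatrix b b T) i
      = γ (S (b i)) (S (b i)) / γ (b i) (b i) := by
    intro i
    have hTb : γ (T (b i)) (b i) = (b.repr (T (b i)) i) * γ (b i) (b i) := by
      conv_lhs => rw [← b.sum_repr (T (b i))]
      rw [map_sum, LinearMap.sum_apply]
      rw [Finset.sum_eq_single i]
      · simp [smul_eq_mul]
      · intro j _ hj
        simp [LinearMap.isOrthoᵢ_def.mp hb j i hj, smul_eq_mul]
      · simp
    have hbi : γ (b i) (b i) ≠ 0 := ne_of_gt (hpd (b i) (b.ne_zero i))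
    rw [Matrix.diag_apply, LinearMap.toMatrix_apply]
    field_simp
    rw [← hTb, hST]
  rw [Finset.sum_congr rfl (fun i _ => key i)]
  have hne : ∃ i, S (b i) ≠ 0 := by
    by_contra h
    push_neg at h
    exact hS (b.ext fun i => (h i).trans (map_zero S).symm ▸ by simp [h i])
  obtain ⟨i, hi⟩ := hne
  have hterm : ∀ j, (0:ℚ) ≤ γ (S (b j)) (S (b j)) / γ (b j) (b j) := by
    intro j
    rcases eq_or_ne (S (b j)) 0 with h | h
    · simp [h]
    · exact le_of_lt (div_pos (hpd _ h) (hpd _ (b.ne_zero j)))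
  have hstrict : (0:ℚ) < γ (S (b i)) (S (b i)) / γ (b i) (b i) :=
    div_pos (hpd _ hi) (hpd _ (b.ne_zero i))
  exact Finset.sum_pos' (fun j _ => hterm j) ⟨i, Finset.mem_univ i, hstrict⟩

/-- Let `A` be a finite-dimensional ℚ-algebra with an involution
`τ` positive-definite with respect to the trace, and `G` a finite subgroup of `Aˣ`
with `τ g = g⁻¹` for all `g ∈ G`.  Then `B = {x : A | τ g * x * g = x ∀ g ∈ G}`
is a ℚ-subalgebra of `A`, `τ` maps `B` onto `B`, and the restriction of `τ` to `B`
is an involution on `B` which is positive-definite with respect to the trace. -/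
theorem stmt_4 (A : Type*) [Ring A] [Algebra ℚ A] [FiniteDimensional ℚ A]
    (τ : A →ₗ[ℚ] A)
    (hmul : ∀ a b : A, τ (a * b) = τ b * τ a)
    (hinv : ∀ a : A, τ (τ a) = a)
    (hpos : ∀ a : A, a ≠ 0 →
      0 < LinearMap.trace ℚ A (LinearMap.mulLeft ℚ (a * τ a)))
    (G : Subgroup Aˣ) [Finite G]
    (hG : ∀ g ∈ G, τ (g : A) = ((g⁻¹ : Aˣ) : A)) :
    ∃ B : Subalgebra ℚ A,
      (B : Set A) = {x : A | ∀ g ∈ G, τ (g : A) * x * (g : A) = x} ∧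
      τ '' (B : Set A) = (B : Set A) ∧
      ∃ τ' : B →ₗ[ℚ] B,
        (∀ x : B, (τ' x : A) = τ (x : A)) ∧
        (∀ x y : B, τ' (x * y) = τ' y * τ' x) ∧
        (∀ x : B, τ' (τ' x) = x) ∧
        (∀ x : B, x ≠ 0 →
          0 < LinearMap.trace ℚ B (LinearMap.mulLeft ℚ (x * τ' x))) := by
  classical
  have τinj : Function.Injective τ := fun a b h => by rw [← hinv a, h, hinv]
  -- the defining predicate, in unit form
  haveI : Fintype G := Fintype.ofFinite G
  set P : A → Prop := fun x => ∀ g : G, (((g:Aˣ)⁻¹ : Aˣ) : A) * x * ((g:Aˣ) : A) = x with hP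
  have hPiff : ∀ x : A, (∀ g ∈ G, τ (g : A) * x * (g : A) = x) ↔ P x := by
    intro x
    constructor
    · intro h g
      have := h (g : Aˣ) g.2
      rwa [hG (g:Aˣ) g.2] at this
    · intro h g hg
      have := h ⟨g, hg⟩
      rwa [← hG g hg] at this
  -- τ stability at the level of the predicate
  have τstab : ∀ x : A, (∀ g ∈ G, τ (g : A) * x * (g : A) = x) →
      (∀ g ∈ G, τ (g : A) * τ x * (g : A) = τ x) := by
    intro x hx g hg
    have h := congrArg τ (hx g hg)
    rw [hmul (τ (g:A) * x) (g:A), hmul (τ (g:A)) x, ← mul_assoc] at h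
    rwa [hinv] at h
  -- construct B
  have hmulmem : ∀ {x y : A}, x ∈ {x : A | ∀ g ∈ G, τ (g : A) * x * (g : A) = x} →
      y ∈ {x : A | ∀ g ∈ G, τ (g : A) * x * (g : A) = x} →
      x * y ∈ {x : A | ∀ g ∈ G, τ (g : A) * x * (g : A) = x} := by
    intro x y hx hy g hg
    have h1 : ((g : A) * (τ (g:A))) = 1 := by rw [hG g hg]; exact g.mul_inv
    have h1' : ∀ z : A, (g : A) * (τ (g:A) * z) = z := by
      intro z; rw [← mul_assoc, h1, one_mul]
    calc τ (g:A) * (x * y) * g = (τ (g:A) * x * g) * (τ (g:A) * y * g) := by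
          simp [mul_assoc, h1']
      _ = x * y := by rw [hx g hg, hy g hg]
  let Bs : Subalgebra ℚ A :=
    { carrier := {x : A | ∀ g ∈ G, τ (g : A) * x * (g : A) = x}
      mul_mem' := hmulmem
      one_mem' := by
        intro g hg
        rw [mul_one, hG g hg]; exact g.inv_mul
      add_mem' := by
        intro x y hx hy g hg
        rw [mul_add, add_mul, hx g hg, hy g hg]
      algebraMap_mem' := by
        intro q g hg
        rw [Algebra.algebraMap_eq_smul_one, mul_smul_comm, smul_mul_assoc, mul_one, hG g hg,
          g.inv_mul] }
  have hmem : ∀ x : A, x ∈ Bs ↔ (∀ g ∈ G, τ (g : A) * x * (g : A) = x) := fun x => Iff.rfl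
  refine ⟨Bs, rfl, ?_, ?_⟩
  · -- τ '' B = B
    ext y
    simp only [Set.mem_image]
    constructor
    · rintro ⟨x, hx, rfl⟩
      exact τstab x hx
    · intro hy
      exact ⟨τ y, τstab y hy, hinv y⟩
  · -- the restricted involution
    have hstab' : ∀ x ∈ Subalgebra.toSubmodule Bs, τ x ∈ Subalgebra.toSubmodule Bs :=
      fun x hx => τstab x hx
    let τ'v : Bs →ₗ[ℚ] Bs := τ.restrict hstab'
    refine ⟨τ'v, fun x => rfl, ?_, ?_, ?_⟩
    · intro x y
      apply Subtype.ext
      show τ ((x : A) * (y : A)) = τ (y : A) * τ (x : A)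
      exact hmul _ _
    · intro x
      apply Subtype.ext
      show τ (τ (x : A)) = (x : A)
      exact hinv _
    · -- positivity
      intro x hx
      set xa : A := (x : A) with hxa
      have hxa0 : xa ≠ 0 := fun h => hx (Subtype.ext h)
      -- the trace functional
      set Tf : A → ℚ := fun a => LinearMap.trace ℚ A (LinearMap.mulLeft ℚ a) with hTf
      have Tadd : ∀ a b : A, Tf (a + b) = Tf a + Tf b := by
        intro a b
        have h : mulLeft ℚ (a + b) = mulLeft ℚ a + mulLeft ℚ b := by
          ext z; simp [add_mul]
        simp [hTf, h]
      have Tsmul : ∀ (c : ℚ) (a : A), Tf (c • a) = c * Tf a := by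
        intro c a
        have h : mulLeft ℚ (c • a) = c • mulLeft ℚ a := by
          ext z; simp [smul_mul_assoc]
        simp [hTf, h]
      have tcyc : ∀ a b : A, Tf (a * b) = Tf (b * a) := by
        intro a b
        simp only [hTf, LinearMap.mulLeft_mul, ← Module.End.mul_eq_comp]
        exact LinearMap.trace_mul_comm ℚ _ _
      have rot3 : ∀ a b c : A, Tf (a * b * c) = Tf (b * c * a) := by
        intro a b c
        rw [mul_assoc, tcyc]
      have rot4 : ∀ a b c d : A, Tf (a * b * c * d) = Tf (b * c * d * a) := by
        intro a b c d
        rw [mul_assoc a, mul_assoc a, tcyc]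
      -- the symmetric bilinear form
      let γ : LinearMap.BilinForm ℚ A :=
        LinearMap.mk₂ ℚ (fun u v => Tf (u * τ v) + Tf (v * τ u))
          (by intro u u' v
              simp only [add_mul, mul_add, map_add, Tadd]; ring)
          (by intro c u v
              simp only [smul_mul_assoc, mul_smul_comm, map_smul, Tsmul, smul_eq_mul]; ring)
          (by intro u v v'
              simp only [map_add, mul_add, add_mul, Tadd]; ring)
          (by intro c u v
              simp only [map_smul, mul_smul_comm, smul_mul_assoc, Tsmul, smul_eq_mul]; ring)
      have γapp : ∀ u v : A, γ u v = Tf (u * τ v) + Tf (v * τ u) := fun u v => rfl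
      have hγsymm : γ.IsSymm := by
        constructor
        intro u v
        simp only [γapp, RingHom.id_apply]
        ring
      have hγpd : ∀ v : A, v ≠ 0 → 0 < γ v v := by
        intro v hv
        have h := hpos v hv
        rw [γapp]
        have h2 : (0:ℚ) < Tf (v * τ v) := h
        linarith
      -- adjointness of left multiplication
      have hadjL : ∀ c u v : A, γ (c * u) v = γ u (τ c * v) := by
        intro c u v
        have e3 : τ (τ c * v) = τ v * c := by rw [hmul, hinv]
        rw [γapp, γapp, e3, hmul c u]
        simp only [← mul_assoc]
        rw [rot3 c u (τ v), ← rot3 (τ c) v (τ u)]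
      -- adjointness of the conjugation operators
      have hadjG2 : ∀ (g : G) (u v : A),
          γ ((((g:Aˣ)⁻¹ : Aˣ) : A) * u * ((g:Aˣ) : A)) v
            = γ u (((g:Aˣ) : A) * v * (((g:Aˣ)⁻¹ : Aˣ) : A)) := by
        intro g u v
        have hτg : τ ((g:Aˣ) : A) = (((g:Aˣ)⁻¹ : Aˣ) : A) := hG (g:Aˣ) g.2
        have hτgi : τ ((((g:Aˣ)⁻¹ : Aˣ)) : A) = ((g:Aˣ) : A) := by
          have h := hG ((g:Aˣ)⁻¹) (G.inv_mem g.2)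
          rwa [inv_inv] at h
        have hτ1 : τ (((g:Aˣ):A) * v * (((g:Aˣ)⁻¹:Aˣ):A))
            = ((g:Aˣ):A) * τ v * (((g:Aˣ)⁻¹:Aˣ):A) := by
          rw [hmul, hmul, hτgi, hτg, ← mul_assoc]
        have hτ2 : τ ((((g:Aˣ)⁻¹:Aˣ):A) * u * ((g:Aˣ):A))
            = (((g:Aˣ)⁻¹:Aˣ):A) * τ u * ((g:Aˣ):A) := by
          rw [hmul, hmul, hτg, hτgi, ← mul_assoc]
        rw [γapp, γapp, hτ1, hτ2]
        simp only [← mul_assoc]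
        rw [rot4 (((g:Aˣ)⁻¹:Aˣ):A) u ((g:Aˣ):A) (τ v),
          ← rot4 ((g:Aˣ):A) v (((g:Aˣ)⁻¹:Aˣ):A) (τ u)]
      -- the averaging projector
      let φ : G → (A →ₗ[ℚ] A) := fun g =>
        (mulRight ℚ ((g:Aˣ) : A)) ∘ₗ (mulLeft ℚ (((g:Aˣ)⁻¹ : Aˣ) : A))
      have φapp : ∀ (g : G) (a : A),
          φ g a = (((g:Aˣ)⁻¹ : Aˣ) : A) * a * ((g:Aˣ) : A) := fun g a => rfl
      have hn : ((Fintype.card G : ℚ)) ≠ 0 := Nat.cast_ne_zero.mpr Fintype.card_ne_zero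
      let π : A →ₗ[ℚ] A := (Fintype.card G : ℚ)⁻¹ • ∑ g : G, φ g
      have πapp : ∀ a : A, π a = (Fintype.card G : ℚ)⁻¹ • ∑ g : G, φ g a := by
        intro a
        simp [π, LinearMap.sum_apply]
      have hπfix : ∀ a : A, P a → π a = a := by
        intro a ha
        have hsum : (∑ g : G, φ g a) = (Fintype.card G) • a :=
          calc (∑ g : G, φ g a) = ∑ _g : G, a := Finset.sum_congr rfl (fun g _ => ha g)
            _ = (Fintype.card G) • a := by rw [Finset.sum_const, Finset.card_univ]
        rw [πapp, hsum, ← Nat.cast_smul_eq_nsmul ℚ, smul_smul, inv_mul_cancel₀ hn, one_smul]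
      have hπP : ∀ a : A, P (π a) := by
        intro a h
        rw [πapp]
        have hpush : (((h:Aˣ)⁻¹:Aˣ):A) * ((Fintype.card G : ℚ)⁻¹ • ∑ g : G, φ g a) * ((h:Aˣ):A)
            = (Fintype.card G : ℚ)⁻¹ • ∑ g : G, (((h:Aˣ)⁻¹:Aˣ):A) * (φ g a) * ((h:Aˣ):A) := by
          rw [mul_smul_comm, smul_mul_assoc, Finset.mul_sum, Finset.sum_mul]
        rw [hpush]
        congr 1
        have key : ∀ g : G, (((h:Aˣ)⁻¹:Aˣ):A) * (φ g a) * ((h:Aˣ):A) = φ (g * h) a := by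
          intro g
          rw [φapp, φapp]
          rw [show ((g * h : G) : Aˣ) = (g : Aˣ) * (h : Aˣ) from rfl, mul_inv_rev,
            Units.val_mul, Units.val_mul]
          simp only [mul_assoc]
        calc (∑ g : G, (((h:Aˣ)⁻¹:Aˣ):A) * (φ g a) * ((h:Aˣ):A))
            = ∑ g : G, φ (g * h) a := Finset.sum_congr rfl (fun g _ => key g)
          _ = ∑ g : G, φ g a := Fintype.sum_equiv (Equiv.mulRight h) _ _ (fun g => rfl)
      have hπ1 : π 1 = 1 := hπfix 1 (by intro g; rw [mul_one]; exact (g:Aˣ).inv_mul)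
      have hππ : π ∘ₗ π = π := by
        ext a
        exact hπfix (π a) (hπP a)
      have hπadj : ∀ u v : A, γ (π u) v = γ u (π v) := by
        intro u v
        rw [πapp u, πapp v, map_smul, map_sum]
        simp only [LinearMap.smul_apply, LinearMap.sum_apply, map_smul, map_sum, smul_eq_mul]
        congr 1
        have key : ∀ g : G, γ (φ g u) v = γ u (φ g⁻¹ v) := by
          intro g
          rw [φapp, φapp]
          show γ _ v = γ u ((((g:Aˣ)⁻¹)⁻¹ : Aˣ) * v * (((g:Aˣ)⁻¹ : Aˣ) : A))
          rw [inv_inv]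
          exact hadjG2 g u v
        calc (∑ g : G, γ (φ g u) v)
            = ∑ g : G, γ u (φ g⁻¹ v) := Finset.sum_congr rfl (fun g _ => key g)
          _ = ∑ g : G, γ u (φ g v) := Fintype.sum_equiv (Equiv.inv G) _ _ (fun g => rfl)
      -- the operators S and T
      let S : A →ₗ[ℚ] A := (mulLeft ℚ (τ xa)) ∘ₗ π
      let T : A →ₗ[ℚ] A := (π ∘ₗ mulLeft ℚ xa) ∘ₗ S
      have hST : ∀ v w : A, γ (T v) w = γ (S v) (S w) := by
        intro v w
        show γ (π (xa * S v)) w = _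
        rw [hπadj, hadjL]
        rfl
      have hSne : S ≠ 0 := by
        intro h
        have h1 : S 1 = 0 := by rw [h]; rfl
        have h2 : S 1 = τ xa := by
          show τ xa * π 1 = τ xa
          rw [hπ1, mul_one]
        rw [h2] at h1
        exact hxa0 (τinj (h1.trans (map_zero τ).symm))
      have hTpos : 0 < LinearMap.trace ℚ A T := aux_trace_pos γ hγsymm hγpd S T hST hSne
      -- transfer the trace to Bs
      haveI : FiniteDimensional ℚ Bs :=
        FiniteDimensional.of_injective (Subalgebra.toSubmodule Bs).subtype
          (Submodule.injective_subtype _)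
      have hπmem' : ∀ a : A, π a ∈ Subalgebra.toSubmodule Bs :=
        fun a => (hPiff (π a)).2 (hπP a)
      let p : A →ₗ[ℚ] Bs := LinearMap.codRestrict (Subalgebra.toSubmodule Bs) π hπmem'
      let ι : Bs →ₗ[ℚ] A := (Subalgebra.toSubmodule Bs).subtype
      let M : Bs →ₗ[ℚ] Bs := LinearMap.mulLeft ℚ (x * τ'v x)
      have hcomp1 : ι ∘ₗ (M ∘ₗ p) = (mulLeft ℚ (xa * τ xa)) ∘ₗ π := by
        ext a
        rfl
      have hcomp2 : p ∘ₗ ι = LinearMap.id := by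
        ext z
        exact hπfix (z : A) ((hPiff (z : A)).1 z.2)
      have htrace : LinearMap.trace ℚ Bs M
          = LinearMap.trace ℚ A ((mulLeft ℚ (xa * τ xa)) ∘ₗ π) := by
        calc LinearMap.trace ℚ Bs M = LinearMap.trace ℚ Bs (M ∘ₗ (p ∘ₗ ι)) := by
              rw [hcomp2, LinearMap.comp_id]
          _ = LinearMap.trace ℚ Bs ((M ∘ₗ p) ∘ₗ ι) := by rw [LinearMap.comp_assoc]
          _ = LinearMap.trace ℚ A (ι ∘ₗ (M ∘ₗ p)) := LinearMap.trace_comp_comm' _ _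
          _ = LinearMap.trace ℚ A ((mulLeft ℚ (xa * τ xa)) ∘ₗ π) := by rw [hcomp1]
      have htrace2 : LinearMap.trace ℚ A ((mulLeft ℚ (xa * τ xa)) ∘ₗ π)
          = LinearMap.trace ℚ A T := by
        calc LinearMap.trace ℚ A ((mulLeft ℚ (xa * τ xa)) ∘ₗ π)
            = LinearMap.trace ℚ A ((mulLeft ℚ xa ∘ₗ mulLeft ℚ (τ xa)) ∘ₗ π) := by
              rw [LinearMap.mulLeft_mul]
          _ = LinearMap.trace ℚ A (mulLeft ℚ xa ∘ₗ (mulLeft ℚ (τ xa) ∘ₗ π)) := by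
              rw [LinearMap.comp_assoc]
          _ = LinearMap.trace ℚ A ((mulLeft ℚ (τ xa) ∘ₗ π) ∘ₗ mulLeft ℚ xa) := by
              rw [← Module.End.mul_eq_comp, ← Module.End.mul_eq_comp,
                LinearMap.trace_mul_comm]
              rfl
          _ = LinearMap.trace ℚ A ((mulLeft ℚ (τ xa) ∘ₗ (π ∘ₗ π)) ∘ₗ mulLeft ℚ xa) := by
              rw [hππ]
          _ = LinearMap.trace ℚ A ((mulLeft ℚ (τ xa) ∘ₗ π) ∘ₗ (π ∘ₗ mulLeft ℚ xa)) := by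
              rw [← LinearMap.comp_assoc, ← LinearMap.comp_assoc, LinearMap.comp_assoc]
          _ = LinearMap.trace ℚ A ((π ∘ₗ mulLeft ℚ xa) ∘ₗ (mulLeft ℚ (τ xa) ∘ₗ π)) := by
              rw [← Module.End.mul_eq_comp, ← Module.End.mul_eq_comp,
                LinearMap.trace_mul_comm]
              rfl
          _ = LinearMap.trace ℚ A T := rfl
      show 0 < LinearMap.trace ℚ Bs (mulLeft ℚ (x * τ'v x))
      rw [show mulLeft ℚ (x * τ'v x) = M from rfl, htrace, htrace2]
      exact hTpos
end

section
/- Let Λ be a finitely generated free ℤ-module, V = Λ ⊗ ℝ, and C ⊆ V a strict open cone. Let C⁺ denote the convex hull of the set of points of the closure of C lying in Λ ⊗ ℚ ⊆ V. Let Γ be a subgroup of GL(Λ) (the group of ℤ-module automorphisms of Λ) whose induced action on V preserves C. Suppose that: (i) there exists a rational polyhedral cone Π ⊆ C⁺ such that C ⊆ ⋃_{γ∈Γ} γ(Π); and (ii) there exists a linear functional η in the interior of the dual cone of C that takes rational values on Λ and whose stabilizer in Γ under the dual action on V^∨ is trivial. Then ⋃_{γ∈Γ} γ(Π) = C⁺.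 -/
open scoped Pointwise

/-- A rational polyhedral cone in `V` with respect to the lattice `Λ`: the set of
nonnegative real linear combinations of finitely many elements of `Λ`. -/
def IsRationalPolyhedralCone {V : Type*} [AddCommGroup V] [Module ℝ V]
    (Λ : Submodule ℤ V) (P : Set V) : Prop :=
  ∃ s : Finset V, (s : Set V) ⊆ (Λ : Set V) ∧
    P = {x : V | ∃ c : V → ℝ, (∀ v, 0 ≤ c v) ∧ x = ∑ v ∈ s, c v • v}

set_option synthInstance.maxHeartbeats 1000000
set_option maxHeartbeats 2000000
set_option linter.unusedVariables false

namespace Stmt5Aux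

variable {V : Type*} [NormedAddCommGroup V] [NormedSpace ℝ V]

section Cone

variable {C : Set V}

theorem smul_mem_closure (hCcone : ∀ r : ℝ, 0 < r → ∀ v ∈ C, r • v ∈ C)
    {r : ℝ} (hr : 0 < r) {x : V} (hx : x ∈ closure C) :
    r • x ∈ closure C := by
  have h1 : (fun y : V => r • y) '' closure C ⊆ closure C := by
    calc (fun y : V => r • y) '' closure C
        ⊆ closure ((fun y : V => r • y) '' C) :=
          image_closure_subset_closure_image (continuous_const_smul r)
      _ ⊆ closure C := closure_mono (by rintro _ ⟨y, hy, rfl⟩; exact hCcone r hr y hy)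
  exact h1 ⟨x, hx, rfl⟩

theorem zero_mem_closure (hCcone : ∀ r : ℝ, 0 < r → ∀ v ∈ C, r • v ∈ C)
    (hCne : C.Nonempty) : (0 : V) ∈ closure C := by
  obtain ⟨c, hc⟩ := hCne
  have htend : Filter.Tendsto (fun k : ℕ => (1 / ((k : ℝ) + 1)) • c)
      Filter.atTop (nhds 0) := by
    have h0 : Filter.Tendsto (fun k : ℕ => (1 / ((k : ℝ) + 1))) Filter.atTop (nhds 0) :=
      tendsto_one_div_add_atTop_nhds_zero_nat
    simpa using h0.smul_const c
  exact mem_closure_of_tendsto htend (Filter.Eventually.of_forall fun k =>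
    hCcone _ (by positivity) c hc)

theorem smul_mem_closure' (hCcone : ∀ r : ℝ, 0 < r → ∀ v ∈ C, r • v ∈ C)
    (hCne : C.Nonempty) {r : ℝ} (hr : 0 ≤ r) {x : V}
    (hx : x ∈ closure C) : r • x ∈ closure C := by
  rcases eq_or_lt_of_le hr with h | h
  · simpa [← h] using zero_mem_closure hCcone hCne
  · exact smul_mem_closure hCcone h hx

theorem add_mem_self (hCconv : Convex ℝ C)
    (hCcone : ∀ r : ℝ, 0 < r → ∀ v ∈ C, r • v ∈ C) {a c : V} (ha : a ∈ C) (hc : c ∈ C) :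
    a + c ∈ C := by
  have hmid : (1 / 2 : ℝ) • a + (1 / 2 : ℝ) • c ∈ C :=
    hCconv ha hc (by norm_num) (by norm_num) (by norm_num)
  have h2 : (2 : ℝ) • ((1 / 2 : ℝ) • a + (1 / 2 : ℝ) • c) ∈ C := hCcone 2 (by norm_num) _ hmid
  have heq : (2 : ℝ) • ((1 / 2 : ℝ) • a + (1 / 2 : ℝ) • c) = a + c := by
    rw [smul_add, smul_smul, smul_smul]; norm_num
  rwa [heq] at h2

theorem add_mem_closure (hCconv : Convex ℝ C)
    (hCcone : ∀ r : ℝ, 0 < r → ∀ v ∈ C, r • v ∈ C) {a c : V} (ha : a ∈ closure C)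
    (hc : c ∈ closure C) : a + c ∈ closure C := by
  have hmid : (1 / 2 : ℝ) • a + (1 / 2 : ℝ) • c ∈ closure C :=
    hCconv.closure ha hc (by norm_num) (by norm_num) (by norm_num)
  have h2 : (2 : ℝ) • ((1 / 2 : ℝ) • a + (1 / 2 : ℝ) • c) ∈ closure C :=
    smul_mem_closure hCcone (by norm_num) hmid
  have heq : (2 : ℝ) • ((1 / 2 : ℝ) • a + (1 / 2 : ℝ) • c) = a + c := by
    rw [smul_add, smul_smul, smul_smul]; norm_num
  rwa [heq] at h2

theorem closure_add_mem (hCopen : IsOpen C) (hCconv : Convex ℝ C)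
    (hCcone : ∀ r : ℝ, 0 < r → ∀ v ∈ C, r • v ∈ C) {a c : V}
    (ha : a ∈ closure C) (hc : c ∈ C) : a + c ∈ C := by
  obtain ⟨ε, hε, hball⟩ := Metric.isOpen_iff.mp hCopen c hc
  obtain ⟨a', ha'd, ha'⟩ := Metric.mem_closure_iff.mp ha ε hε
  have h1 : c + (a - a') ∈ C := by
    apply hball
    have hd : dist (c + (a - a')) c = dist a a' := by
      rw [dist_eq_norm, dist_eq_norm]; congr 1; abel
    rw [Metric.mem_ball, hd]; exact ha'
  have h2 : a' + (c + (a - a')) ∈ C := add_mem_self hCconv hCcone ha'd h1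
  have heq : a' + (c + (a - a')) = a + c := by abel
  rwa [heq] at h2

theorem sum_mem_closure (hCconv : Convex ℝ C)
    (hCcone : ∀ r : ℝ, 0 < r → ∀ v ∈ C, r • v ∈ C)
    (hCne : C.Nonempty) {ι : Type*} (t : Finset ι) (f : ι → V)
    (hf : ∀ i ∈ t, f i ∈ closure C) : (∑ i ∈ t, f i) ∈ closure C := by
  classical
  induction t using Finset.induction_on with
  | empty => simpa using zero_mem_closure hCcone hCne
  | insert a t' hni ih =>
    rw [Finset.sum_insert hni]
    exact add_mem_closure hCconv hCcone (hf a (Finset.mem_insert_self a t'))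
      (ih fun i hi => hf i (Finset.mem_insert_of_mem hi))

end Cone

section Dual

/-- From `η` in the interior of the dual cone, get a uniform lower bound on `closure C`. -/
theorem exists_delta (C : Set V) (η : V →L[ℝ] ℝ)
    (hηdual : η ∈ interior {φ : V →L[ℝ] ℝ | ∀ v ∈ C, 0 ≤ φ v}) :
    ∃ δ : ℝ, 0 < δ ∧ ∀ v ∈ closure C, δ * ‖v‖ ≤ η v := by
  obtain ⟨ε, hε, hball⟩ := Metric.mem_nhds_iff.mp (mem_interior_iff_mem_nhds.mp hηdual)
  refine ⟨ε / 2, by positivity, fun v hv => ?_⟩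
  rcases eq_or_ne v 0 with rfl | hv0
  · simp
  obtain ⟨g, hg1, hgv⟩ := exists_dual_vector ℝ v (norm_ne_zero_iff.mpr hv0)
  have hφ : η - (ε / 2) • g ∈ {φ : V →L[ℝ] ℝ | ∀ v ∈ C, 0 ≤ φ v} := by
    apply hball
    rw [Metric.mem_ball, dist_eq_norm]
    have heq : η - (ε / 2) • g - η = -((ε / 2) • g) := by abel
    rw [heq, norm_neg]
    have : ‖(ε / 2) • g‖ = ‖(ε / 2 : ℝ)‖ * ‖g‖ := by exact norm_smul (ε / 2 : ℝ) g
    rw [this, hg1, Real.norm_eq_abs, abs_of_pos (by positivity : (0:ℝ) < ε / 2)]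
    linarith
  have hcl : ∀ w ∈ closure C, 0 ≤ (η - (ε / 2) • g) w := by
    intro w hw
    have hCsub : C ⊆ {w : V | 0 ≤ (η - (ε / 2) • g) w} := fun u hu => hφ u hu
    have hclosed : IsClosed {w : V | 0 ≤ (η - (ε / 2) • g) w} :=
      isClosed_le continuous_const (η - (ε / 2) • g).continuous
    exact hclosed.closure_subset_iff.mpr hCsub hw
  have hkey := hcl v hv
  simp only [ContinuousLinearMap.sub_apply, ContinuousLinearMap.smul_apply] at hkey
  have hgv' : g v = ‖v‖ := by exact_mod_cast hgv
  rw [hgv'] at hkey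
  simp only [smul_eq_mul] at hkey
  linarith

end Dual

end Stmt5Aux

namespace Stmt5Aux2

open Submodule Set

variable {V : Type*} [NormedAddCommGroup V] [NormedSpace ℝ V]

/-- Bounded subsets of the lattice are finite. -/
theorem lattice_ball_finite {n : ℕ} (b : Module.Basis (Fin n) ℝ V)
    (L : Submodule ℤ V) (hL : L = Submodule.span ℤ (Set.range ⇑b)) (R : ℝ) :
    ((L : Set V) ∩ Metric.closedBall 0 R).Finite := by
  subst hL
  haveI : FiniteDimensional ℝ V := b.finiteDimensional_of_finite
  haveI hdisc : DiscreteTopology (Submodule.span ℤ (Set.range ⇑b)) := inferInstance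
  have hclosed : IsClosed ((Submodule.span ℤ (Set.range ⇑b) : Submodule ℤ V) : Set V) := by
    have : IsClosed ((Submodule.span ℤ (Set.range ⇑b)).toAddSubgroup : Set V) :=
      AddSubgroup.isClosed_of_discrete
    exact this
  have hcpt : IsCompact (((Submodule.span ℤ (Set.range ⇑b) : Submodule ℤ V) : Set V)
      ∩ Metric.closedBall 0 R) :=
    (isCompact_closedBall (0 : V) R).inter_left hclosed
  haveI hd2 : DiscreteTopology
      (((Submodule.span ℤ (Set.range ⇑b) : Submodule ℤ V) : Set V) ∩ Metric.closedBall 0 R :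
        Set V) :=
    DiscreteTopology.of_subset hdisc Set.inter_subset_left
  exact hcpt.finite (isDiscrete_iff_discreteTopology.mpr hd2)

/-- Common denominator for η on the lattice. -/
theorem exists_denom {n : ℕ} (b : Module.Basis (Fin n) ℝ V)
    (L : Submodule ℤ V) (hL : L = Submodule.span ℤ (Set.range ⇑b))
    (η : V →L[ℝ] ℝ) (hηrat : ∀ x ∈ L, ∃ q : ℚ, η x = (q : ℝ)) :
    ∃ D : ℕ, 0 < D ∧ ∀ x ∈ L, ∃ k : ℤ, (η x : ℝ) = (k : ℝ) / (D : ℝ) := by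
  classical
  have hbL : ∀ i, b i ∈ L := by
    intro i; rw [hL]; exact Submodule.subset_span ⟨i, rfl⟩
  choose q hq using fun i => hηrat (b i) (hbL i)
  set D : ℕ := ∏ i, (q i).den with hD
  have hDpos : 0 < D := Finset.prod_pos fun i _ => (q i).pos
  refine ⟨D, hDpos, fun x hx => ?_⟩
  rw [hL] at hx
  induction hx using Submodule.span_induction with
  | mem v hv =>
    obtain ⟨i, rfl⟩ := hv
    have hdvd : (q i).den ∣ D := Finset.dvd_prod_of_mem _ (Finset.mem_univ i)
    refine ⟨(q i).num * ((D / (q i).den : ℕ) : ℤ), ?_⟩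
    rw [hq i]
    have hden0 : ((q i).den : ℝ) ≠ 0 := by exact_mod_cast (q i).den_nz
    have hD0 : (D : ℝ) ≠ 0 := by exact_mod_cast hDpos.ne'
    have hcast : ((D / (q i).den : ℕ) : ℝ) = (D : ℝ) / ((q i).den : ℝ) :=
      Nat.cast_div hdvd hden0
    have hc2 : (((q i).num * ((D / (q i).den : ℕ) : ℤ) : ℤ) : ℝ)
        = ((q i).num : ℝ) * ((D / (q i).den : ℕ) : ℝ) := by
      rw [Int.cast_mul, Int.cast_natCast]
    rw [hc2, hcast, Rat.cast_def]
    field_simp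
  | zero => exact ⟨0, by simp⟩
  | add u v _ _ hu hv =>
    obtain ⟨k1, hk1⟩ := hu
    obtain ⟨k2, hk2⟩ := hv
    exact ⟨k1 + k2, by rw [map_add, hk1, hk2]; push_cast; ring⟩
  | smul a v _ hv =>
    obtain ⟨k, hk⟩ := hv
    refine ⟨a * k, ?_⟩
    have : (a : ℤ) • v = ((a : ℝ)) • v := by
      rw [← Int.cast_smul_eq_zsmul ℝ]
    rw [this, map_smul, smul_eq_mul, hk]
    push_cast
    ring

end Stmt5Aux2

namespace Stmt5Aux3

variable {V : Type*} [NormedAddCommGroup V] [NormedSpace ℝ V]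

/-- The minimum of `η (γ z)` over `γ ∈ Γ` is attained, for `z` in the rational hull. -/
theorem min_attained (C : Set V) (L : Submodule ℤ V) (Γ : Subgroup (V ≃ₗ[ℝ] V))
    (hΓLmem : ∀ γ ∈ Γ, ∀ x ∈ L, γ x ∈ L)
    (hΓCl : ∀ γ ∈ Γ, ∀ v ∈ closure C, γ v ∈ closure C)
    (η : V →L[ℝ] ℝ) (hηcl : ∀ v ∈ closure C, 0 ≤ η v)
    (D : ℕ) (hDpos : 0 < D) (hquant : ∀ x ∈ L, ∃ k : ℤ, (η x : ℝ) = (k : ℝ) / (D : ℝ))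
    {z : V} (hz : z ∈ convexHull ℝ
      {v ∈ closure C | ∃ x ∈ L, ∃ m : ℕ, m ≠ 0 ∧ (m : ℝ) • v = x}) :
    ∃ γ₀ ∈ Γ, ∀ γ ∈ Γ, η (γ₀ z) ≤ η (γ z) := by
  classical
  rw [convexHull_eq] at hz
  obtain ⟨ι, t, w, f, hw0, hw1, hfS, hcm⟩ := hz
  have hzsum : z = ∑ i ∈ t, w i • f i := by
    rw [← hcm, Finset.centerMass_eq_of_sum_1 _ _ hw1]
  set tp : Finset ι := t.filter (fun i => 0 < w i) with htp
  have htpsub : tp ⊆ t := Finset.filter_subset _ _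
  have hzsum' : z = ∑ i ∈ tp, w i • f i := by
    rw [hzsum]
    refine (Finset.sum_filter_of_ne ?_).symm
    intro i hi hne
    rcases lt_or_eq_of_le (hw0 i hi) with h | h
    · exact h
    · exact absurd (by rw [← h, zero_smul]) hne
  have hwpos : ∀ i ∈ tp, 0 < w i := fun i hi => (Finset.mem_filter.mp hi).2
  -- witnesses
  have hfS' : ∀ i ∈ tp, f i ∈ closure C ∧ ∃ m : ℕ, m ≠ 0 ∧ (m : ℝ) • f i ∈ (L : Set V) := by
    intro i hi
    obtain ⟨hcl, x, hxL, m, hm0, hmx⟩ := hfS i (htpsub hi)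
    exact ⟨hcl, m, hm0, by rw [hmx]; exact hxL⟩
  choose hfcl m hm0 hmL using hfS'
  -- quantization of the values η (γ (f i))
  have hq : ∀ γ ∈ Γ, ∀ i (hi : i ∈ tp),
      ∃ k : ℕ, η (γ (f i)) = (k : ℝ) / ((D : ℝ) * (m i hi : ℝ)) := by
    intro γ hγ i hi
    have hγfL : γ ((m i hi : ℝ) • f i) ∈ L := hΓLmem γ hγ _ (hmL i hi)
    obtain ⟨k', hk'⟩ := hquant _ hγfL
    have hγfcl : γ (f i) ∈ closure C := hΓCl γ hγ _ (hfcl i hi)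
    have hmpos : (0 : ℝ) < (m i hi : ℝ) := by
      exact_mod_cast Nat.pos_of_ne_zero (hm0 i hi)
    have hval : (m i hi : ℝ) * η (γ (f i)) = (k' : ℝ) / (D : ℝ) := by
      rw [← hk', map_smul, map_smul, smul_eq_mul]
    have hD0 : (0 : ℝ) < (D : ℝ) := by exact_mod_cast hDpos
    have hk'nonneg : (0 : ℝ) ≤ (k' : ℝ) := by
      have h1 : 0 ≤ (m i hi : ℝ) * η (γ (f i)) :=
        mul_nonneg hmpos.le (hηcl _ hγfcl)
      rw [hval] at h1
      have h2 : (k' : ℝ) = ((k' : ℝ) / (D : ℝ)) * (D : ℝ) := by field_simp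
      rw [h2]
      exact mul_nonneg h1 hD0.le
    have hk'int : (0 : ℤ) ≤ k' := by exact_mod_cast hk'nonneg
    refine ⟨k'.toNat, ?_⟩
    have hk'toNat : ((k'.toNat : ℕ) : ℝ) = (k' : ℝ) := by
      exact_mod_cast congrArg (Int.cast : ℤ → ℝ) (Int.toNat_of_nonneg hk'int)
    have hstep : η (γ (f i)) = (k' : ℝ) / ((D : ℝ) * (m i hi : ℝ)) := by
      rw [eq_div_iff (by positivity)]
      have hk'eq : (k' : ℝ) = (m i hi : ℝ) * η (γ (f i)) * (D : ℝ) := by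
        rw [hval]; field_simp
      rw [hk'eq]; ring
    rw [hstep, hk'toNat]
  -- the value of η (γ z)
  have hval : ∀ γ : V ≃ₗ[ℝ] V, η (γ z) = ∑ i ∈ tp, w i * η (γ (f i)) := by
    intro γ
    rw [hzsum', map_sum, map_sum]
    exact Finset.sum_congr rfl fun i _ => by rw [map_smul, map_smul, smul_eq_mul]
  set B := η z with hB
  set N : ∀ i ∈ tp, ℕ := fun i hi => ⌊B * (D : ℝ) * (m i hi : ℝ) / w i⌋₊ with hN
  -- the set of small values is finite
  set g : (∀ i : {x // x ∈ tp}, ℕ) → ℝ :=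
    fun k => ∑ i ∈ tp.attach, w i * ((k i : ℝ) / ((D : ℝ) * (m i i.2 : ℝ))) with hg
  set KS : Set (∀ _ : {x // x ∈ tp}, ℕ) :=
    Set.pi Set.univ (fun i : {x // x ∈ tp} => Set.Iic (N i i.2)) with hKS
  have hKSfin : KS.Finite := Set.Finite.pi fun i => Set.finite_Iic _
  set VS : Set ℝ := {r | ∃ γ ∈ Γ, η (γ z) = r} ∩ Set.Iic B with hVS
  have hVSsub : VS ⊆ g '' KS := by
    rintro r ⟨⟨γ, hγ, hr⟩, hrB⟩
    refine ⟨fun i => (hq γ hγ i i.2).choose, fun i hiu => ?_, ?_⟩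
    · -- bound on each k i
      have hspec := (hq γ hγ i i.2).choose_spec
      have hterm : w i * η (γ (f i)) ≤ B := by
        calc w i * η (γ (f i))
            ≤ ∑ j ∈ tp, w j * η (γ (f j)) := by
              refine Finset.single_le_sum (f := fun j => w j * η (γ (f j)))
                (fun j hj => ?_) i.2
              exact mul_nonneg (hwpos j hj).le
                (hηcl _ (hΓCl γ hγ _ (hfcl j hj)))
          _ = η (γ z) := (hval γ).symm
          _ ≤ B := by rw [hr]; exact hrB
      rw [hspec] at hterm
      have hwipos := hwpos i i.2
      have hD0 : (0 : ℝ) < (D : ℝ) := by exact_mod_cast hDpos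
      have hm0' : (0 : ℝ) < (m i i.2 : ℝ) := by
        exact_mod_cast Nat.pos_of_ne_zero (hm0 i i.2)
      rw [Set.mem_Iic]
      apply Nat.le_floor
      rw [le_div_iff₀ hwipos]
      have h2 : ((hq γ hγ i i.2).choose : ℝ) * w i
          = (w i * (((hq γ hγ i i.2).choose : ℝ) / ((D : ℝ) * (m i i.2 : ℝ))))
            * ((D : ℝ) * (m i i.2 : ℝ)) := by
        field_simp
      rw [h2]
      calc (w i * (((hq γ hγ i i.2).choose : ℝ) / ((D : ℝ) * (m i i.2 : ℝ))))
            * ((D : ℝ) * (m i i.2 : ℝ))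
          ≤ B * ((D : ℝ) * (m i i.2 : ℝ)) :=
            mul_le_mul_of_nonneg_right hterm (mul_pos hD0 hm0').le
        _ = B * (D : ℝ) * (m i i.2 : ℝ) := by ring
    · -- the value matches
      rw [← hr, hval γ, hg]
      rw [← Finset.sum_attach tp (fun i => w i * η (γ (f i)))]
      exact Finset.sum_congr rfl fun i _ => by rw [(hq γ hγ i i.2).choose_spec]
  have hVSfin : VS.Finite := (hKSfin.image g).subset hVSsub
  have hVSne : VS.Nonempty := by
    refine ⟨η z, ⟨1, one_mem Γ, rfl⟩, ?_⟩
    rw [Set.mem_Iic]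
  obtain ⟨r₀, hr₀VS, hr₀min⟩ := Set.exists_min_image VS id hVSfin hVSne
  obtain ⟨⟨γ₀, hγ₀, hγ₀r⟩, hr₀B⟩ := hr₀VS
  refine ⟨γ₀, hγ₀, fun γ hγ => ?_⟩
  by_cases h : η (γ z) ≤ B
  · have : η (γ z) ∈ VS := ⟨⟨γ, hγ, rfl⟩, h⟩
    have := hr₀min _ this
    simp only [id] at this
    rw [hγ₀r]
    exact this
  · push_neg at h
    rw [hγ₀r]
    exact le_trans hr₀B h.le

end Stmt5Aux3

/-- Looijenga.  Let `Λ` be a finitely generated free ℤ-module,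
`V = Λ ⊗ ℝ` (realized here as a real vector space `V` with a basis `b` generating
the lattice `L = span_ℤ (range b)`), and `C ⊆ V` a strict open cone.  Let `C⁺` be
the convex hull of the rational points of the closure of `C`.  Let `Γ ≤ GL(Λ)`
(realized as a subgroup of `GL(V)` preserving the lattice `L`) preserve `C`.
If (i) there is a rational polyhedral cone `P ⊆ C⁺` with `C ⊆ ⋃_{γ ∈ Γ} γ(P)`,
and (ii) there is a functional `η` in the interior of the dual cone of `C`,
rational on `L`, with trivial stabilizer in `Γ`, then `⋃_{γ ∈ Γ} γ(P) = C⁺`. -/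
theorem stmt_5 (n : ℕ) (V : Type*) [NormedAddCommGroup V] [NormedSpace ℝ V]
    (b : Module.Basis (Fin n) ℝ V)
    (L : Submodule ℤ V) (hL : L = Submodule.span ℤ (Set.range ⇑b))
    (C : Set V)
    (hCopen : IsOpen C) (hCconv : Convex ℝ C) (hCne : C.Nonempty)
    (hCcone : ∀ r : ℝ, 0 < r → ∀ v ∈ C, r • v ∈ C)
    (hCstrict : closure C ∩ closure (-C) ⊆ {0})
    (Cplus : Set V)
    (hCplus : Cplus = convexHull ℝ
      {v ∈ closure C | ∃ x ∈ L, ∃ m : ℕ, m ≠ 0 ∧ (m : ℝ) • v = x})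
    (Γ : Subgroup (V ≃ₗ[ℝ] V))
    (hΓL : ∀ γ ∈ Γ, ⇑γ '' (L : Set V) = (L : Set V))
    (hΓC : ∀ γ ∈ Γ, ⇑γ '' C = C)
    -- hypothesis (i)
    (P : Set V) (hP : IsRationalPolyhedralCone L P) (hPsub : P ⊆ Cplus)
    (hPcover : C ⊆ ⋃ γ ∈ Γ, ⇑γ '' P)
    -- hypothesis (ii)
    (η : V →L[ℝ] ℝ)
    (hηdual : η ∈ interior {φ : V →L[ℝ] ℝ | ∀ v ∈ C, 0 ≤ φ v})
    (hηrat : ∀ x ∈ L, ∃ q : ℚ, η x = (q : ℝ))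
    (hηstab : ∀ γ ∈ Γ, (∀ v : V, η (γ v) = η v) → γ = 1) :
    (⋃ γ ∈ Γ, ⇑γ '' P) = Cplus := by
  classical
  haveI : FiniteDimensional ℝ V := b.finiteDimensional_of_finite
  subst hCplus
  set S : Set V := {v ∈ closure C | ∃ x ∈ L, ∃ m : ℕ, m ≠ 0 ∧ (m : ℝ) • v = x} with hS
  -- group action facts
  have hmul : ∀ (f g : V ≃ₗ[ℝ] V) (v : V), (f * g) v = f (g v) := fun _ _ _ => rfl
  have hinv : ∀ (f : V ≃ₗ[ℝ] V) (v : V), (f⁻¹) (f v) = v := fun f v => f.symm_apply_apply v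
  have hΓCl : ∀ γ ∈ Γ, ∀ v ∈ closure C, γ v ∈ closure C := by
    intro γ hγ v hv
    have hcont : Continuous ⇑γ := by
      have := LinearMap.continuous_of_finiteDimensional (γ : V →ₗ[ℝ] V)
      simpa using this
    have himg : ⇑γ '' closure C ⊆ closure (⇑γ '' C) :=
      image_closure_subset_closure_image hcont
    rw [hΓC γ hγ] at himg
    exact himg ⟨v, hv, rfl⟩
  have hΓLmem : ∀ γ ∈ Γ, ∀ x ∈ L, γ x ∈ L := by
    intro γ hγ x hx
    have hmem : γ x ∈ ⇑γ '' (L : Set V) := Set.mem_image_of_mem _ hx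
    rwa [hΓL γ hγ] at hmem
  have hΓS : ∀ γ ∈ Γ, ∀ v ∈ S, γ v ∈ S := by
    rintro γ hγ v ⟨hvcl, x, hxL, mm, hm0, hmx⟩
    exact ⟨hΓCl γ hγ v hvcl, γ x, hΓLmem γ hγ x hxL, mm, hm0, by rw [← map_smul, hmx]⟩
  have hΓhull : ∀ γ ∈ Γ, ∀ z ∈ convexHull ℝ S, γ z ∈ convexHull ℝ S := by
    intro γ hγ z hz
    have h1 : ⇑γ '' convexHull ℝ S = convexHull ℝ (⇑γ '' S) := by
      have := (γ : V →ₗ[ℝ] V).image_convexHull S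
      simpa using this
    have h2 : convexHull ℝ (⇑γ '' S) ⊆ convexHull ℝ S :=
      convexHull_mono (by rintro _ ⟨v, hv, rfl⟩; exact hΓS γ hγ v hv)
    exact h2 (h1 ▸ Set.mem_image_of_mem _ hz)
  have hUsub : (⋃ γ ∈ Γ, ⇑γ '' P) ⊆ convexHull ℝ S := by
    refine Set.iUnion₂_subset fun γ hγ => ?_
    rintro _ ⟨p, hp, rfl⟩
    exact hΓhull γ hγ p (hPsub hp)
  have hCsub : C ⊆ convexHull ℝ S := fun c hc => hUsub (hPcover hc)
  have hhullcl : convexHull ℝ S ⊆ closure C :=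
    convexHull_min (fun v hv => hv.1) hCconv.closure
  obtain ⟨δ, hδpos, hδ⟩ := Stmt5Aux.exists_delta C η hηdual
  have hηcl : ∀ v ∈ closure C, 0 ≤ η v := fun v hv =>
    le_trans (by positivity) (hδ v hv)
  obtain ⟨D, hDpos, hquant⟩ := Stmt5Aux2.exists_denom b L hL η hηrat
  have hD0 : (0 : ℝ) < (D : ℝ) := by exact_mod_cast hDpos
  -- normalize the generating set of P
  obtain ⟨s₀, hs₀L, hPeq₀⟩ := hP
  set s : Finset V := s₀.erase 0 with hs
  have hsL : ∀ v ∈ s, v ∈ L := fun v hv =>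
    hs₀L (Finset.mem_coe.mpr (Finset.mem_of_mem_erase hv))
  have h0s : (0 : V) ∉ s := Finset.notMem_erase _ _
  have hPeq : P = {x : V | ∃ c : V → ℝ, (∀ v, 0 ≤ c v) ∧ x = ∑ v ∈ s, c v • v} := by
    rw [hPeq₀]
    ext x
    constructor
    · rintro ⟨c, hc0, rfl⟩
      exact ⟨c, hc0, (Finset.sum_erase _ (by simp)).symm⟩
    · rintro ⟨c, hc0, rfl⟩
      exact ⟨c, hc0, Finset.sum_erase _ (by simp)⟩
  have hsP : ∀ v ∈ s, v ∈ P := by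
    intro v hv
    rw [hPeq]
    refine ⟨fun u => if u = v then 1 else 0, fun u => by by_cases h : u = v <;> simp [h], ?_⟩
    have hterm : ∀ u ∈ s, (if u = v then (1 : ℝ) else 0) • u = if u = v then u else 0 := by
      intro u _; split <;> simp
    rw [Finset.sum_congr rfl hterm, Finset.sum_ite_eq' s v (fun u => u)]
    simp [hv]
  have hsCl : ∀ v ∈ s, v ∈ closure C := fun v hv => hhullcl (hPsub (hsP v hv))
  have hsub1D : ∀ γ ∈ Γ, ∀ v ∈ s, 1 / (D : ℝ) ≤ η (γ v) := by
    intro γ hγ v hv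
    obtain ⟨k, hk⟩ := hquant (γ v) (hΓLmem γ hγ v (hsL v hv))
    have hvne : γ v ≠ 0 := by
      intro h
      exact h0s ((γ.map_eq_zero_iff.mp h) ▸ hv)
    have hpos : 0 < η (γ v) := by
      have h1 := hδ _ (hΓCl γ hγ v (hsCl v hv))
      have h2 : 0 < ‖γ v‖ := norm_pos_iff.mpr hvne
      nlinarith
    rw [hk] at hpos ⊢
    have hkpos : 0 < (k : ℝ) := by
      have hkk : (k : ℝ) = ((k : ℝ) / (D : ℝ)) * (D : ℝ) := by field_simp
      nlinarith
    have hk1 : (1 : ℝ) ≤ (k : ℝ) := by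
      have h1 : (0 : ℤ) < k := by exact_mod_cast hkpos
      have h2 : (1 : ℤ) ≤ k := h1
      exact_mod_cast h2
    gcongr
  have hmin : ∀ z ∈ convexHull ℝ S, ∃ γ₀ ∈ Γ, ∀ γ ∈ Γ, η (γ₀ z) ≤ η (γ z) := fun z hz =>
    Stmt5Aux3.min_attained C L Γ hΓLmem hΓCl η hηcl D hDpos hquant hz
  -- main step: a Dirichlet-minimal point of the rational hull lies in some translate of P
  have hmain : ∀ x ∈ convexHull ℝ S, (∀ γ ∈ Γ, η x ≤ η (γ x)) →
      x ∈ ⋃ γ ∈ Γ, ⇑γ '' P := by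
    intro x hxhull hxmin
    have hxcl : x ∈ closure C := hhullcl hxhull
    obtain ⟨c, hcC⟩ := id hCne
    obtain ⟨γc, hγcΓ, hγcmin⟩ := hmin c (hCsub hcC)
    set c₀ : V := γc c with hc₀
    have hc₀C : c₀ ∈ C := by
      have := Set.mem_image_of_mem ⇑γc hcC
      rwa [hΓC γc hγcΓ] at this
    have hc₀min : ∀ γ ∈ Γ, η c₀ ≤ η (γ c₀) := by
      intro γ hγ
      have h := hγcmin (γ * γc) (mul_mem hγ hγcΓ)
      rwa [hmul] at h
    have hηc₀ : 0 ≤ η c₀ := hηcl c₀ (subset_closure hc₀C)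
    -- approximating sequence
    set tseq : ℕ → ℝ := fun mi => 1 / ((mi : ℝ) + 1) with htseq
    have htpos : ∀ mi, 0 < tseq mi := fun mi => by positivity
    have htle1 : ∀ mi, tseq mi ≤ 1 := by
      intro mi
      rw [htseq]
      rw [div_le_one (by positivity)]
      have := Nat.cast_nonneg (α := ℝ) mi
      linarith
    have htto0 : Filter.Tendsto tseq Filter.atTop (nhds 0) :=
      tendsto_one_div_add_atTop_nhds_zero_nat
    set xseq : ℕ → V := fun mi => x + tseq mi • c₀ with hxseqdef
    have hxseqC : ∀ mi, xseq mi ∈ C := fun mi =>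
      Stmt5Aux.closure_add_mem hCopen hCconv hCcone hxcl (hCcone _ (htpos mi) c₀ hc₀C)
    have hxseqcover : ∀ mi, ∃ γ, γ ∈ Γ ∧ ∃ p, p ∈ P ∧ γ p = xseq mi := by
      intro mi
      have h := hPcover (hxseqC mi)
      simp only [Set.mem_iUnion] at h
      obtain ⟨γ, hγ, p, hp, hpe⟩ := h
      exact ⟨γ, hγ, p, hp, hpe⟩
    choose γseq hγseqΓ pseq hpseqP hγpeq using hxseqcover
    have hcoeff : ∀ mi, ∃ c : V → ℝ, (∀ v, 0 ≤ c v) ∧ pseq mi = ∑ v ∈ s, c v • v := by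
      intro mi
      have h := hpseqP mi
      rw [hPeq] at h
      exact h
    choose cf hcf0 hcfsum using hcoeff
    have hexp : ∀ mi (γ' : V ≃ₗ[ℝ] V),
        η (γ' (pseq mi)) = ∑ v ∈ s, cf mi v * η (γ' v) := by
      intro mi γ'
      rw [hcfsum mi, map_sum, map_sum]
      exact Finset.sum_congr rfl fun v _ => by rw [map_smul, map_smul, smul_eq_mul]
    set M : ℝ := η x + η c₀ with hM
    have hM0 : 0 ≤ M := add_nonneg (hηcl x hxcl) hηc₀
    have hηxm : ∀ mi, η (xseq mi) = η x + tseq mi * η c₀ := by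
      intro mi
      rw [hxseqdef]
      simp only [map_add, map_smul, smul_eq_mul]
    have hηxmle : ∀ mi, η (xseq mi) ≤ M := by
      intro mi
      rw [hηxm mi, hM]
      have h1 := htle1 mi
      have h2 := htpos mi
      nlinarith
    have hmass : ∀ mi, η (xseq mi) = ∑ v ∈ s, cf mi v * η (γseq mi v) := by
      intro mi
      rw [← hγpeq mi]
      exact hexp mi (γseq mi)
    have htermnn : ∀ mi, ∀ v ∈ s, 0 ≤ cf mi v * η (γseq mi v) := fun mi v hv =>
      mul_nonneg (hcf0 mi v) (hηcl _ (hΓCl _ (hγseqΓ mi) v (hsCl v hv)))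
    have hterm_le : ∀ mi, ∀ v ∈ s, cf mi v * η (γseq mi v) ≤ M := by
      intro mi v hv
      calc cf mi v * η (γseq mi v)
          ≤ ∑ u ∈ s, cf mi u * η (γseq mi u) :=
            Finset.single_le_sum (f := fun u => cf mi u * η (γseq mi u)) (htermnn mi) hv
        _ = η (xseq mi) := (hmass mi).symm
        _ ≤ M := hηxmle mi
    have hcfub : ∀ mi, ∀ v ∈ s, cf mi v ≤ (D : ℝ) * M := by
      intro mi v hv
      have h2 : cf mi v * (1 / (D : ℝ)) ≤ cf mi v * η (γseq mi v) :=
        mul_le_mul_of_nonneg_left (hsub1D (γseq mi) (hγseqΓ mi) v hv) (hcf0 mi v)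
      have h3 : cf mi v * (1 / (D : ℝ)) ≤ M := le_trans h2 (hterm_le mi v hv)
      calc cf mi v = (cf mi v * (1 / (D : ℝ))) * (D : ℝ) := by field_simp
        _ ≤ M * (D : ℝ) := mul_le_mul_of_nonneg_right h3 hD0.le
        _ = (D : ℝ) * M := by ring
    -- pass to an ultrafilter
    set U : Ultrafilter ℕ := Ultrafilter.of Filter.atTop with hUdef
    have hUle : (U : Filter ℕ) ≤ Filter.atTop := Ultrafilter.of_le _
    have hclim : ∀ v ∈ s, ∃ r : ℝ, 0 ≤ r ∧
        Filter.Tendsto (fun mi => cf mi v) U (nhds r) := by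
      intro v hv
      have hcb : ∀ mi, cf mi v ∈ Set.Icc (0 : ℝ) ((D : ℝ) * M) := fun mi =>
        ⟨hcf0 mi v, hcfub mi v hv⟩
      have hmem : (U.map (fun mi => cf mi v) : Filter ℝ) ≤
          Filter.principal (Set.Icc (0 : ℝ) ((D : ℝ) * M)) := by
        rw [Filter.le_principal_iff]
        exact Filter.mem_map.mpr (Filter.univ_mem' hcb)
      obtain ⟨r, hrIcc, hle⟩ := (isCompact_Icc (a := (0:ℝ)) (b := (D : ℝ) * M)).ultrafilter_le_nhds
        (U.map (fun mi => cf mi v)) hmem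
      exact ⟨r, hrIcc.1, hle⟩
    choose! cl hcl0 hcltend using hclim
    -- bounded and escaping directions
    set bd : Finset V := s.filter (fun v => ∃ u : V, {mi | γseq mi v = u} ∈ U) with hbddef
    have hbdsub : bd ⊆ s := Finset.filter_subset _ _
    set uvf : V → V := fun v =>
      if h : ∃ u : V, {mi | γseq mi v = u} ∈ U then h.choose else 0 with huvfdef
    have huvf : ∀ v ∈ bd, {mi | γseq mi v = uvf v} ∈ U := by
      intro v hv
      have h := (Finset.mem_filter.mp hv).2
      rw [huvfdef]
      simp only [dif_pos h]
      exact h.choose_spec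
    have hesc : ∀ v ∈ s, v ∉ bd → cl v = 0 := by
      intro v hv hvnb
      have hnotbd : ¬ ∃ u : V, {mi | γseq mi v = u} ∈ U := fun h =>
        hvnb (Finset.mem_filter.mpr ⟨hv, h⟩)
      have hbig : ∀ R : ℝ, {mi | R < ‖γseq mi v‖} ∈ U := by
        intro R
        by_contra hR
        rw [← Ultrafilter.compl_mem_iff_notMem] at hR
        have hsub : {mi | R < ‖γseq mi v‖}ᶜ ⊆
            {mi | γseq mi v ∈ (L : Set V) ∩ Metric.closedBall 0 R} := by
          intro mi hmi
          simp only [Set.mem_compl_iff, Set.mem_setOf_eq, not_lt] at hmi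
          refine ⟨hΓLmem _ (hγseqΓ mi) v (hsL v hv), ?_⟩
          simpa [Metric.mem_closedBall, dist_zero_right] using hmi
        have hmemU : {mi | γseq mi v ∈ (L : Set V) ∩ Metric.closedBall 0 R} ∈ U :=
          Filter.mem_of_superset hR hsub
        have hfin := Stmt5Aux2.lattice_ball_finite b L hL R
        have hrw : {mi | γseq mi v ∈ (L : Set V) ∩ Metric.closedBall 0 R}
            = ⋃ u ∈ ((L : Set V) ∩ Metric.closedBall 0 R), {mi | γseq mi v = u} := by
          ext mi
          simp only [Set.mem_setOf_eq, Set.mem_iUnion, exists_prop]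
          constructor
          · intro h
            exact ⟨γseq mi v, h, rfl⟩
          · rintro ⟨u, hu, he⟩
            rw [he]
            exact hu
        rw [hrw] at hmemU
        obtain ⟨u, hu, huU⟩ := (Ultrafilter.finite_biUnion_mem_iff hfin).mp hmemU
        exact hnotbd ⟨u, huU⟩
      have htend0 : Filter.Tendsto (fun mi => cf mi v) U (nhds 0) := by
        rw [Metric.tendsto_nhds]
        intro ε hε
        have hkey : {mi | (M + 1) / (δ * ε) < ‖γseq mi v‖} ∈ U := hbig _
        refine Filter.mem_of_superset hkey ?_
        intro mi hmi
        simp only [Set.mem_setOf_eq] at hmi ⊢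
        have hcfnn := hcf0 mi v
        have h2 : δ * ‖γseq mi v‖ ≤ η (γseq mi v) :=
          hδ _ (hΓCl _ (hγseqΓ mi) v (hsCl v hv))
        have h3 : cf mi v * (δ * ‖γseq mi v‖) ≤ M :=
          le_trans (mul_le_mul_of_nonneg_left h2 hcfnn) (hterm_le mi v hv)
        rw [dist_zero_right, Real.norm_eq_abs, abs_of_nonneg hcfnn]
        by_contra hge
        push_neg at hge
        have h4 : (M + 1) < ‖γseq mi v‖ * (δ * ε) := by
          rw [div_lt_iff₀ (by positivity)] at hmi
          exact hmi
        nlinarith [mul_le_mul_of_nonneg_right hge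
          (mul_nonneg hδpos.le (norm_nonneg (γseq mi v)))]
      exact tendsto_nhds_unique (hcltend v hv) htend0
    -- the limit point
    set y : V := ∑ v ∈ bd, cl v • uvf v with hydef
    have hytend : Filter.Tendsto (fun mi => ∑ v ∈ bd, cf mi v • γseq mi v) U (nhds y) := by
      rw [hydef]
      refine tendsto_finset_sum _ fun v hv => ?_
      have h1 : Filter.Tendsto (fun mi => cf mi v • uvf v) U (nhds (cl v • uvf v)) :=
        (hcltend v (hbdsub hv)).smul_const _
      refine Filter.Tendsto.congr' ?_ h1
      exact Filter.eventuallyEq_of_mem (huvf v hv) fun mi hmi => by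
        simp only [Set.mem_setOf_eq] at hmi
        rw [hmi]
    have hxseqtend : Filter.Tendsto xseq U (nhds x) := by
      have h0 : Filter.Tendsto (fun mi => tseq mi • c₀) U (nhds 0) := by
        have h := (htto0.mono_left hUle).smul_const c₀
        rwa [zero_smul] at h
      have h1 : Filter.Tendsto (fun _ : ℕ => x) (U : Filter ℕ) (nhds x) := tendsto_const_nhds
      have h2 := h1.add h0
      rwa [add_zero] at h2
    set w : V := x - y with hwdef
    have hqtend : Filter.Tendsto
        (fun mi => xseq mi - ∑ v ∈ bd, cf mi v • γseq mi v) U (nhds w) :=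
      hxseqtend.sub hytend
    have hxseqsum : ∀ mi, xseq mi = ∑ v ∈ s, cf mi v • γseq mi v := by
      intro mi
      rw [← hγpeq mi, hcfsum mi, map_sum]
      exact Finset.sum_congr rfl fun v _ => map_smul _ _ _
    have hqmem : ∀ mi, xseq mi - ∑ v ∈ bd, cf mi v • γseq mi v ∈ closure C := by
      intro mi
      have hsplit : xseq mi - ∑ v ∈ bd, cf mi v • γseq mi v
          = ∑ v ∈ s \ bd, cf mi v • γseq mi v := by
        rw [hxseqsum mi, ← Finset.sum_sdiff hbdsub]
        exact add_sub_cancel_right _ _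
      rw [hsplit]
      refine Stmt5Aux.sum_mem_closure hCconv hCcone hCne _ _ fun v hv => ?_
      have hvs := (Finset.mem_sdiff.mp hv).1
      exact Stmt5Aux.smul_mem_closure' hCcone hCne (hcf0 mi v)
        (hΓCl _ (hγseqΓ mi) v (hsCl v hvs))
    have hwcl : w ∈ closure C :=
      isClosed_closure.mem_of_tendsto hqtend (Filter.Eventually.of_forall hqmem)
    -- pick an index where all bounded directions agree
    have hIn : {mi | ∀ v ∈ bd, γseq mi v = uvf v} ∈ U := by
      have hrw : {mi | ∀ v ∈ bd, γseq mi v = uvf v}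
          = ⋂ v ∈ bd, {mi | γseq mi v = uvf v} := by
        ext mi
        simp
      rw [hrw]
      exact (Filter.biInter_finset_mem _).mpr fun v hv => huvf v hv
    obtain ⟨n₀, hn₀⟩ := Filter.nonempty_of_mem hIn
    -- the Dirichlet inequality
    have hDir : ∀ mi, η x + tseq mi * η c₀ ≤ ∑ v ∈ s, cf mi v * η (γseq n₀ v) := by
      intro mi
      set γ' : V ≃ₗ[ℝ] V := γseq n₀ * (γseq mi)⁻¹ with hγ'def
      have hγ'Γ : γ' ∈ Γ := mul_mem (hγseqΓ n₀) (inv_mem (hγseqΓ mi))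
      have h2 : γ' (xseq mi) = γseq n₀ (pseq mi) := by
        rw [hγ'def, hmul, ← hγpeq mi, hinv]
      calc η x + tseq mi * η c₀
          ≤ η (γ' x) + tseq mi * η (γ' c₀) :=
            add_le_add (hxmin γ' hγ'Γ)
              (mul_le_mul_of_nonneg_left (hc₀min γ' hγ'Γ) (htpos mi).le)
        _ = η (γ' (xseq mi)) := by
            rw [hxseqdef]
            simp only [map_add, map_smul, smul_eq_mul]
        _ = η (γseq n₀ (pseq mi)) := by rw [h2]
        _ = ∑ v ∈ s, cf mi v * η (γseq n₀ v) := hexp mi (γseq n₀)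
    have hlhs : Filter.Tendsto (fun mi => η x + tseq mi * η c₀) U (nhds (η x)) := by
      have h0 : Filter.Tendsto (fun mi => tseq mi * η c₀) U (nhds 0) := by
        have h := (htto0.mono_left hUle).mul_const (η c₀)
        rwa [zero_mul] at h
      have h1 : Filter.Tendsto (fun _ : ℕ => η x) (U : Filter ℕ) (nhds (η x)) :=
        tendsto_const_nhds
      have h2 := h1.add h0
      rwa [add_zero] at h2
    have hrhs : Filter.Tendsto (fun mi => ∑ v ∈ s, cf mi v * η (γseq n₀ v)) U
        (nhds (∑ v ∈ s, cl v * η (γseq n₀ v))) :=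
      tendsto_finset_sum _ fun v hv => (hcltend v hv).mul_const _
    have hkey : η x ≤ ∑ v ∈ s, cl v * η (γseq n₀ v) :=
      le_of_tendsto_of_tendsto' hlhs hrhs hDir
    have hzero : ∑ v ∈ s \ bd, cl v * η (γseq n₀ v) = 0 :=
      Finset.sum_eq_zero fun v hv => by
        rw [hesc v (Finset.mem_sdiff.mp hv).1 (Finset.mem_sdiff.mp hv).2, zero_mul]
    have hsumy : ∑ v ∈ s, cl v * η (γseq n₀ v) = η y := by
      calc ∑ v ∈ s, cl v * η (γseq n₀ v)
          = ∑ v ∈ s \ bd, cl v * η (γseq n₀ v) + ∑ v ∈ bd, cl v * η (γseq n₀ v) :=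
            (Finset.sum_sdiff hbdsub).symm
        _ = ∑ v ∈ bd, cl v * η (γseq n₀ v) := by rw [hzero, zero_add]
        _ = η y := by
            rw [hydef, map_sum]
            exact Finset.sum_congr rfl fun v hv => by
              rw [map_smul, smul_eq_mul, hn₀ v hv]
    have hηw : η w ≤ 0 := by
      have he : η w = η x - η y := by rw [hwdef, map_sub]
      rw [hsumy] at hkey
      rw [he]
      linarith
    have hw0 : w = 0 := by
      have h1 := hδ w hwcl
      have h2 : ‖w‖ ≤ 0 := by nlinarith
      exact norm_eq_zero.mp (le_antisymm h2 (norm_nonneg w))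
    have hxy : x = y := by
      have := hwdef ▸ hw0
      exact sub_eq_zero.mp this
    -- conclude
    refine Set.mem_iUnion.mpr ⟨γseq n₀, Set.mem_iUnion.mpr ⟨hγseqΓ n₀, ?_⟩⟩
    refine ⟨∑ v ∈ s, (if v ∈ bd then cl v else 0) • v, ?_, ?_⟩
    · rw [hPeq]
      refine ⟨fun v => if v ∈ bd then cl v else 0, fun v => ?_, rfl⟩
      by_cases h : v ∈ bd
      · simpa [h] using hcl0 v (hbdsub h)
      · simp [h]
    · rw [map_sum]
      have hconv : ∑ v ∈ s, γseq n₀ ((if v ∈ bd then cl v else 0) • v)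
          = ∑ v ∈ bd, cl v • uvf v := by
        rw [← Finset.sum_sdiff hbdsub]
        have hz2 : ∑ v ∈ s \ bd, γseq n₀ ((if v ∈ bd then cl v else 0) • v) = 0 :=
          Finset.sum_eq_zero fun v hv => by
            rw [if_neg (Finset.mem_sdiff.mp hv).2, zero_smul, map_zero]
        rw [hz2, zero_add]
        exact Finset.sum_congr rfl fun v hv => by
          rw [if_pos hv, map_smul, hn₀ v hv]
      rw [hconv, ← hydef]
      exact hxy.symm
  -- finish: both inclusions
  apply Set.Subset.antisymm hUsub
  intro x hx
  obtain ⟨γ₀, hγ₀Γ, hγ₀min⟩ := hmin x hx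
  have hx' : γ₀ x ∈ convexHull ℝ S := hΓhull γ₀ hγ₀Γ x hx
  have hx'min : ∀ γ ∈ Γ, η (γ₀ x) ≤ η (γ (γ₀ x)) := by
    intro γ hγ
    have h := hγ₀min (γ * γ₀) (mul_mem hγ hγ₀Γ)
    rwa [hmul] at h
  have hx'mem := hmain (γ₀ x) hx' hx'min
  simp only [Set.mem_iUnion] at hx'mem
  obtain ⟨γ₁, hγ₁Γ, p, hpP, hpe⟩ := hx'mem
  refine Set.mem_iUnion.mpr ⟨γ₀⁻¹ * γ₁,
    Set.mem_iUnion.mpr ⟨mul_mem (inv_mem hγ₀Γ) hγ₁Γ, p, hpP, ?_⟩⟩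
  rw [hmul, hpe]
  exact hinv γ₀ x
end

section
/- Let C be a strict open cone in a finite-dimensional real vector space V, and assume C spans V. Then there exist a direct sum decomposition V = V₁ ⊕ ... ⊕ V_s and indecomposable strict open cones C_i ⊆ V_i (for i = 1, ..., s) such that C = C₁ ⊕ ... ⊕ C_s = {v₁ + ... + v_s : v_i ∈ C_i}. -/
open scoped Pointwise

/-- A strict open cone in a real topological vector space: a nonempty open convex
subset closed under multiplication by positive real scalars such that the closures
of `C` and `-C` intersect only in `0`. -/
def IsStrictOpenCone {V : Type*} [NormedAddCommGroup V] [NormedSpace ℝ V]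
    (C : Set V) : Prop :=
  IsOpen C ∧ Convex ℝ C ∧ C.Nonempty ∧
    (∀ r : ℝ, 0 < r → ∀ v ∈ C, r • v ∈ C) ∧
    closure C ∩ closure (-C) ⊆ {0}

/-- A cone `C ⊆ V` is decomposable if it can be written as the direct sum
`C₁ + C₂` of two nontrivial cones `C₁ ⊆ W₁`, `C₂ ⊆ W₂` with respect to a
nontrivial direct sum decomposition `V = W₁ ⊕ W₂` of its ambient space. -/
def IsDecomposableCone {V : Type*} [AddCommGroup V] [Module ℝ V]
    (C : Set V) : Prop :=
  ∃ (W₁ W₂ : Submodule ℝ V) (C₁ C₂ : Set V),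
    W₁ ≠ ⊥ ∧ W₂ ≠ ⊥ ∧ IsCompl W₁ W₂ ∧
    C₁ ⊆ (W₁ : Set V) ∧ C₂ ⊆ (W₂ : Set V) ∧
    C₁.Nonempty ∧ C₂.Nonempty ∧ Convex ℝ C₁ ∧ Convex ℝ C₂ ∧
    (∀ r : ℝ, 0 < r → ∀ v ∈ C₁, r • v ∈ C₁) ∧
    (∀ r : ℝ, 0 < r → ∀ v ∈ C₂, r • v ∈ C₂) ∧
    (0 : V) ∉ C₁ ∧ (0 : V) ∉ C₂ ∧
    C = C₁ + C₂

lemma strict_map {V V' : Type*} [NormedAddCommGroup V] [NormedSpace ℝ V]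
    [NormedAddCommGroup V'] [NormedSpace ℝ V'] (e : V ≃L[ℝ] V') {C : Set V}
    (h : IsStrictOpenCone C) : IsStrictOpenCone (⇑e '' C) := by
  obtain ⟨hop, hcv, hne, hcone, hstr⟩ := h
  refine ⟨e.toHomeomorph.isOpenMap _ hop, hcv.linear_image (e : V →ₗ[ℝ] V'),
    hne.image _, ?_, ?_⟩
  · rintro r hr _ ⟨v, hv, rfl⟩
    exact ⟨r • v, hcone r hr v hv, map_smul _ _ _⟩
  · intro x hx
    have h1 : x ∈ closure (⇑e '' C) := hx.1
    have h2 : x ∈ closure (-(⇑e '' C)) := hx.2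
    have hneg : -(⇑e '' C) = ⇑e '' (-C) := by
      ext y; simp only [Set.mem_neg, Set.mem_image]
      constructor
      · rintro ⟨v, hv, hy⟩; exact ⟨-v, by simpa using hv, by rw [map_neg, hy, neg_neg]⟩
      · rintro ⟨v, hv, rfl⟩; exact ⟨-v, by simpa using hv, by simp⟩
    have hcl : ∀ s : Set V, closure (⇑e '' s) = ⇑e '' closure s := fun s => by
      simpa using (e.toHomeomorph.image_closure s).symm
    rw [hcl] at h1
    rw [hneg, hcl] at h2
    obtain ⟨v, hv, rfl⟩ := h1
    obtain ⟨w, hw, hwv⟩ := h2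
    have hwv' : w = v := e.injective hwv
    have hv0 : v = 0 := hstr ⟨hv, hwv' ▸ hw⟩
    simp [hv0]

lemma decomp_map {V V' : Type*} [AddCommGroup V] [Module ℝ V]
    [AddCommGroup V'] [Module ℝ V'] (e : V ≃ₗ[ℝ] V') {C : Set V}
    (h : IsDecomposableCone (⇑e '' C)) : IsDecomposableCone C := by
  obtain ⟨W₁, W₂, C₁, C₂, h1, h2, hcompl, hs1, hs2, hn1, hn2, hc1, hc2, hr1, hr2, hz1, hz2, hsum⟩ := h
  refine ⟨W₁.map (e.symm : V' →ₗ[ℝ] V), W₂.map (e.symm : V' →ₗ[ℝ] V), ⇑e.symm '' C₁, ⇑e.symm '' C₂, ?_, ?_, ?_, ?_, ?_,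
    hn1.image _, hn2.image _, hc1.linear_image (e.symm : V' →ₗ[ℝ] V),
    hc2.linear_image (e.symm : V' →ₗ[ℝ] V), ?_, ?_, ?_, ?_, ?_⟩
  · intro h
    apply h1
    rw [Submodule.eq_bot_iff]
    intro x hx
    have hm : e.symm x ∈ Submodule.map (e.symm : V' →ₗ[ℝ] V) W₁ := Submodule.mem_map_of_mem hx
    rw [h, Submodule.mem_bot] at hm
    have := congrArg e hm
    simpa using this
  · intro h
    apply h2
    rw [Submodule.eq_bot_iff]
    intro x hx
    have hm : e.symm x ∈ Submodule.map (e.symm : V' →ₗ[ℝ] V) W₂ := Submodule.mem_map_of_mem hx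
    rw [h, Submodule.mem_bot] at hm
    have := congrArg e hm
    simpa using this
  · rw [isCompl_iff, disjoint_iff, codisjoint_iff] at hcompl ⊢
    refine ⟨?_, ?_⟩
    · rw [← Submodule.map_inf _ e.symm.injective, hcompl.1, Submodule.map_bot]
    · rw [eq_top_iff]
      rintro x -
      rw [← Submodule.map_sup, hcompl.2]
      exact ⟨e x, trivial, by simp⟩
  · rintro _ ⟨v, hv, rfl⟩; exact Submodule.mem_map_of_mem (hs1 hv)
  · rintro _ ⟨v, hv, rfl⟩; exact Submodule.mem_map_of_mem (hs2 hv)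
  · rintro r hr _ ⟨v, hv, rfl⟩; exact ⟨r • v, hr1 r hr v hv, map_smul _ _ _⟩
  · rintro r hr _ ⟨v, hv, rfl⟩; exact ⟨r • v, hr2 r hr v hv, map_smul _ _ _⟩
  · rintro ⟨v, hv, hv0⟩
    exact hz1 (by rwa [show v = 0 from by simpa using congrArg e hv0] at hv)
  · rintro ⟨v, hv, hv0⟩
    exact hz2 (by rwa [show v = 0 from by simpa using congrArg e hv0] at hv)
  · have : C = ⇑e.symm '' (⇑e '' C) := by simp [Set.image_image]
    rw [this, hsum]
    ext v
    simp only [Set.mem_add, Set.mem_image]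
    constructor
    · rintro ⟨_, ⟨a, ha, b, hb, rfl⟩, rfl⟩
      exact ⟨_, ⟨a, ha, rfl⟩, _, ⟨b, hb, rfl⟩, (map_add _ _ _).symm⟩
    · rintro ⟨_, ⟨a, ha, rfl⟩, _, ⟨b, hb, rfl⟩, rfl⟩
      exact ⟨a + b, ⟨a, ha, b, hb, rfl⟩, map_add _ _ _⟩
lemma cone_subset_closure {V : Type*} [NormedAddCommGroup V] [NormedSpace ℝ V]
    {C C₁ C₂ : Set V} (hsum : C = C₁ + C₂) (hn2 : C₂.Nonempty)
    (hr2 : ∀ r : ℝ, 0 < r → ∀ v ∈ C₂, r • v ∈ C₂) :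
    C₁ ⊆ closure C := by
  intro c₁ hc₁
  obtain ⟨c₂, hc₂⟩ := hn2
  have htd : Filter.Tendsto (fun t : ℝ => c₁ + t • c₂) (nhdsWithin 0 (Set.Ioi 0)) (nhds c₁) := by
    have : Filter.Tendsto (fun t : ℝ => c₁ + t • c₂) (nhds 0) (nhds c₁) := by
      have hcont : Continuous (fun t : ℝ => c₁ + t • c₂) :=
        continuous_const.add (continuous_id.smul continuous_const)
      simpa using hcont.tendsto 0
    exact this.mono_left nhdsWithin_le_nhds
  refine mem_closure_of_tendsto htd ?_
  filter_upwards [self_mem_nhdsWithin] with t ht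
  rw [hsum]
  exact Set.add_mem_add hc₁ (hr2 t ht c₂ hc₂)

lemma pieces {V : Type*} [NormedAddCommGroup V] [NormedSpace ℝ V]
    [FiniteDimensional ℝ V] {C : Set V}
    (hC : IsStrictOpenCone C) (hspan : Submodule.span ℝ C = ⊤)
    {W₁ W₂ : Submodule ℝ V} {C₁ C₂ : Set V} (hcompl : IsCompl W₁ W₂)
    (hs1 : C₁ ⊆ (W₁ : Set V)) (hs2 : C₂ ⊆ (W₂ : Set V))
    (hn2 : C₂.Nonempty)
    (hr1 : ∀ r : ℝ, 0 < r → ∀ v ∈ C₁, r • v ∈ C₁)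
    (hr2 : ∀ r : ℝ, 0 < r → ∀ v ∈ C₂, r • v ∈ C₂)
    (hsum : C = C₁ + C₂) :
    IsStrictOpenCone ((Subtype.val ⁻¹' C₁ : Set W₁)) ∧
      Submodule.span ℝ ((Subtype.val ⁻¹' C₁ : Set W₁)) = ⊤ ∧
      Subtype.val '' (Subtype.val ⁻¹' C₁ : Set W₁) = C₁ := by
  obtain ⟨hop, hcv, hne, hcone, hstr⟩ := hC
  set p : V →L[ℝ] W₁ :=
    LinearMap.toContinuousLinearMap (W₁.linearProjOfIsCompl W₂ hcompl) with hp
  have hpc₁ : ∀ x ∈ C₁, (p x : V) = x := by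
    intro x hx
    have : p x = ⟨x, hs1 hx⟩ := Submodule.linearProjOfIsCompl_apply_left hcompl ⟨x, hs1 hx⟩
    rw [this]
  have hpc₂ : ∀ x ∈ C₂, p x = 0 := by
    intro x hx
    exact Submodule.linearProjOfIsCompl_apply_right hcompl ⟨x, hs2 hx⟩
  have himg : ⇑p '' C = (Subtype.val ⁻¹' C₁ : Set W₁) := by
    ext x
    constructor
    · rintro ⟨v, hv, rfl⟩
      rw [hsum] at hv
      obtain ⟨a, ha, b, hb, rfl⟩ := hv
      have : p (a + b) = p a + p b := map_add _ _ _
      rw [Set.mem_preimage, this, hpc₂ b hb, add_zero]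
      show ((p a : V)) ∈ C₁
      rw [hpc₁ a ha]
      exact ha
    · intro hx
      obtain ⟨c₂, hc₂⟩ := hn2
      refine ⟨(x : V) + c₂, ?_, ?_⟩
      · rw [hsum]; exact Set.add_mem_add hx hc₂
      · have h1 : p ((x : V)) = x := Submodule.linearProjOfIsCompl_apply_left hcompl x
        rw [map_add, h1, hpc₂ c₂ hc₂, add_zero]
  have hval : Subtype.val '' (Subtype.val ⁻¹' C₁ : Set W₁) = C₁ := by
    rw [Set.image_preimage_eq_inter_range]
    rw [Subtype.range_coe]
    exact Set.inter_eq_self_of_subset_left hs1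
  have hpsurj : Function.Surjective ⇑p := by
    intro x
    exact ⟨(x : V), Submodule.linearProjOfIsCompl_apply_left hcompl x⟩
  have hopen : IsOpen ((Subtype.val ⁻¹' C₁ : Set W₁)) := by
    rw [← himg]
    exact p.isOpenMap hpsurj C hop
  have hC₁cl : C₁ ⊆ closure C := cone_subset_closure hsum hn2 hr2
  have hnegsum : -C = (-C₁) + (-C₂) := by
    rw [hsum]
    ext x
    simp only [Set.mem_neg, Set.mem_add]
    constructor
    · rintro ⟨a, ha, b, hb, hab⟩
      exact ⟨-a, by simpa using ha, -b, by simpa using hb,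
        by rw [← neg_add]; rw [hab]; simp⟩
    · rintro ⟨a, ha, b, hb, rfl⟩
      exact ⟨-a, ha, -b, hb, by abel⟩
  have hC₁cl' : -C₁ ⊆ closure (-C) :=
    cone_subset_closure hnegsum (by
      obtain ⟨c₂, hc₂⟩ := hn2; exact ⟨-c₂, by simpa using hc₂⟩) (by
      intro r hr v hv
      rw [Set.mem_neg] at hv ⊢
      simpa using hr2 r hr (-v) hv)
  -- the closure facts
  have hD₁cl : closure (Subtype.val ⁻¹' C₁ : Set W₁) ⊆ Subtype.val ⁻¹' closure C := by
    intro x hx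
    have h1 : (x : V) ∈ Subtype.val '' closure (Subtype.val ⁻¹' C₁ : Set W₁) :=
      Set.mem_image_of_mem _ hx
    have h2 := image_closure_subset_closure_image (f := (Subtype.val : W₁ → V))
      continuous_subtype_val (s := (Subtype.val ⁻¹' C₁ : Set W₁)) h1
    rw [hval] at h2
    exact closure_minimal hC₁cl isClosed_closure h2
  have hD₁cl' : closure (-(Subtype.val ⁻¹' C₁) : Set W₁) ⊆ Subtype.val ⁻¹' closure (-C) := by
    intro x hx
    have h1 : (x : V) ∈ Subtype.val '' closure (-(Subtype.val ⁻¹' C₁) : Set W₁) :=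
      Set.mem_image_of_mem _ hx
    have h2 := image_closure_subset_closure_image (f := (Subtype.val : W₁ → V))
      continuous_subtype_val (s := (-(Subtype.val ⁻¹' C₁) : Set W₁)) h1
    have h3 : Subtype.val '' (-(Subtype.val ⁻¹' C₁) : Set W₁) ⊆ -C₁ := by
      rintro _ ⟨d, hd, rfl⟩
      rw [Set.mem_neg] at hd ⊢
      simpa using hd
    have h4 : closure (Subtype.val '' (-(Subtype.val ⁻¹' C₁) : Set W₁)) ⊆ closure (-C) :=
      closure_minimal (fun y hy => hC₁cl' (h3 hy)) isClosed_closure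
    exact h4 h2
  -- span of C₁
  have hsC₁ : Submodule.span ℝ C₁ = W₁ := by
    have hle : Submodule.span ℝ C₁ ≤ W₁ := Submodule.span_le.mpr hs1
    have hle2 : Submodule.span ℝ C₂ ≤ W₂ := Submodule.span_le.mpr hs2
    have htop : Submodule.span ℝ C₁ ⊔ Submodule.span ℝ C₂ = ⊤ := by
      rw [eq_top_iff, ← hspan, Submodule.span_le]
      intro v hv
      rw [hsum] at hv
      obtain ⟨a, ha, b, hb, rfl⟩ := hv
      exact Submodule.add_mem _
        (Submodule.mem_sup_left (Submodule.subset_span ha))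
        (Submodule.mem_sup_right (Submodule.subset_span hb))
    have : (Submodule.span ℝ C₁ ⊔ Submodule.span ℝ C₂) ⊓ W₁ =
        Submodule.span ℝ C₁ ⊔ (Submodule.span ℝ C₂ ⊓ W₁) :=
      sup_inf_assoc_of_le _ hle
    rw [htop, top_inf_eq] at this
    have hbot : Submodule.span ℝ C₂ ⊓ W₁ = ⊥ := by
      rw [← le_bot_iff]
      calc Submodule.span ℝ C₂ ⊓ W₁ ≤ W₂ ⊓ W₁ := inf_le_inf_right _ hle2
        _ = ⊥ := by rw [inf_comm]; exact disjoint_iff.mp hcompl.disjoint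
    rw [hbot, sup_bot_eq] at this
    exact this.symm
  refine ⟨⟨hopen, ?_, ?_, ?_, ?_⟩, ?_, hval⟩
  · rw [← himg]
    exact hcv.linear_image (p : V →ₗ[ℝ] W₁)
  · rw [← himg]
    exact hne.image _
  · intro r hr x hx
    show ((r • x : W₁) : V) ∈ C₁
    rw [Submodule.coe_smul]
    exact hr1 r hr _ hx
  · intro x hx
    have h1 : (x : V) ∈ closure C := hD₁cl hx.1
    have h2 : (x : V) ∈ closure (-C) := hD₁cl' hx.2
    have := hstr ⟨h1, h2⟩
    exact Subtype.ext this
  · have hmap : Submodule.map W₁.subtype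
        (Submodule.span ℝ (Subtype.val ⁻¹' C₁ : Set W₁)) = W₁ := by
      rw [Submodule.map_span]
      show Submodule.span ℝ (Subtype.val '' (Subtype.val ⁻¹' C₁ : Set W₁)) = W₁
      rw [hval, hsC₁]
    have := Submodule.map_injective_of_injective W₁.injective_subtype
      (by rw [hmap, Submodule.map_subtype_top] :
        Submodule.map W₁.subtype (Submodule.span ℝ (Subtype.val ⁻¹' C₁ : Set W₁)) =
          Submodule.map W₁.subtype ⊤)
    exact this

lemma span_map {V V' : Type*} [AddCommGroup V] [Module ℝ V]
    [AddCommGroup V'] [Module ℝ V'] (e : V ≃ₗ[ℝ] V') {C : Set V}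
    (h : Submodule.span ℝ C = ⊤) : Submodule.span ℝ (⇑e '' C) = ⊤ := by
  have himg : ⇑e '' C = ⇑(e : V →ₗ[ℝ] V') '' C := rfl
  rw [himg, ← Submodule.map_span, h, eq_top_iff]
  rintro x -
  exact ⟨e.symm x, Submodule.mem_top, by simp⟩

lemma reindex {V : Type*} [AddCommGroup V] [Module ℝ V]
    {ι κ : Type*} [Fintype ι] [Fintype κ] (e : ι ≃ κ)
    (W' : ι → Submodule ℝ V) (Cs' : ∀ j, Set (W' j)) :
    {v : V | ∃ g : ∀ j, W' j, (∀ j, g j ∈ Cs' j) ∧ v = ∑ j, (g j : V)} =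
    {v : V | ∃ f : ∀ i : κ, W' (e.symm i),
      (∀ i, f i ∈ Cs' (e.symm i)) ∧ v = ∑ i, ((f i : V))} := by
  have key : ∀ (j j'' : ι) (h : j'' = j) (x : W' j'') (_ : x ∈ Cs' j''),
      (h ▸ x : W' j) ∈ Cs' j ∧ ((h ▸ x : W' j) : V) = ↑x := by
    rintro j _ rfl x hx; exact ⟨hx, rfl⟩
  ext v
  simp only [Set.mem_setOf_eq]
  constructor
  · rintro ⟨g, hg, rfl⟩
    refine ⟨fun i => g (e.symm i), fun i => hg _, ?_⟩
    exact (Equiv.sum_comp e.symm (fun j => ((g j : V)))).symm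
  · rintro ⟨f, hf, rfl⟩
    refine ⟨fun j => (e.symm_apply_apply j) ▸ f (e j), fun j => (key _ _ _ _ (hf (e j))).1, ?_⟩
    have hsum : ∀ j : ι, (((e.symm_apply_apply j) ▸ f (e j) : W' j) : V) = ↑(f (e j)) :=
      fun j => (key _ _ _ _ (hf (e j))).2
    rw [Finset.sum_congr rfl (fun j _ => hsum j)]
    exact (Equiv.sum_comp e (fun i => ((f i : V)))).symm

lemma combine_disjoint {V : Type*} [AddCommGroup V] [Module ℝ V]
    {W₁ W₂ : Submodule ℝ V} (hdisj : Disjoint W₁ W₂)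
    (A S : Submodule ℝ W₁) (hAS : Disjoint A S)
    (T : Submodule ℝ V) (hT : T ≤ W₂) :
    Disjoint (A.map W₁.subtype) ((S.map W₁.subtype) ⊔ T) := by
  rw [Submodule.disjoint_def]
  intro x hxA hx
  obtain ⟨y, hy, z, hz, rfl⟩ := Submodule.mem_sup.mp hx
  have hxW₁ : y + z ∈ W₁ := Submodule.map_subtype_le _ _ hxA
  have hyW₁ : y ∈ W₁ := Submodule.map_subtype_le _ _ hy
  have hz0 : z = 0 := by
    have hzW₁ : z ∈ W₁ := by
      have : z = (y + z) - y := by abel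
      rw [this]; exact Submodule.sub_mem _ hxW₁ hyW₁
    exact Submodule.disjoint_def.mp hdisj z hzW₁ (hT hz)
  rw [hz0, add_zero] at hxA ⊢
  have : y ∈ (A ⊓ S).map W₁.subtype := by
    rw [Submodule.map_inf _ W₁.injective_subtype]
    exact ⟨hxA, hy⟩
  rw [disjoint_iff.mp hAS, Submodule.map_bot, Submodule.mem_bot] at this
  exact this

lemma indec_case {V : Type*} [NormedAddCommGroup V] [NormedSpace ℝ V]
    [FiniteDimensional ℝ V]
    (C : Set V) (hC : IsStrictOpenCone C) (hdec : ¬ IsDecomposableCone C) :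
    ∃ (s : ℕ) (W : Fin s → Submodule ℝ V) (Cs : (i : Fin s) → Set (W i)),
      iSupIndep W ∧ (⨆ i, W i) = ⊤ ∧
      (∀ i, IsStrictOpenCone (Cs i) ∧ ¬ IsDecomposableCone (Cs i)) ∧
      C = {v : V | ∃ f : (i : Fin s) → W i,
            (∀ i, f i ∈ Cs i) ∧ v = ∑ i, (f i : V)} := by
  let el : V ≃ₗ[ℝ] (⊤ : Submodule ℝ V) := Submodule.topEquiv.symm
  let e : V ≃L[ℝ] (⊤ : Submodule ℝ V) := el.toContinuousLinearEquiv
  have hecoe : ⇑e = ⇑el := rfl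
  refine ⟨1, fun _ => ⊤, fun _ => ⇑e '' C, ?_, by simp, ?_, ?_⟩
  · rw [iSupIndep_def]
    intro i
    have hb : (⨆ j, ⨆ (_ : j ≠ i), (⊤ : Submodule ℝ V)) = ⊥ :=
      le_bot_iff.mp (iSup_le fun j => iSup_le fun hj =>
        absurd (Subsingleton.elim j i) hj)
    rw [hb]
    exact disjoint_bot_right
  · intro i
    refine ⟨strict_map e hC, fun h => hdec (decomp_map el ?_)⟩
    rwa [← hecoe]
  · ext v
    simp only [Set.mem_setOf_eq]
    constructor
    · intro hv
      refine ⟨fun _ => e v, fun _ => Set.mem_image_of_mem _ hv, ?_⟩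
      rw [Fin.sum_univ_one]
      rfl
    · rintro ⟨f, hf, rfl⟩
      obtain ⟨c, hc, hce⟩ := hf 0
      rw [Fin.sum_univ_one, ← hce]
      exact hc

universe u

lemma key (n : ℕ) :
    ∀ (V : Type u) [NormedAddCommGroup V] [NormedSpace ℝ V]
      [FiniteDimensional ℝ V] (C : Set V),
      IsStrictOpenCone C → Submodule.span ℝ C = ⊤ → Module.finrank ℝ V ≤ n →
      ∃ (s : ℕ) (W : Fin s → Submodule ℝ V) (Cs : (i : Fin s) → Set (W i)),
        iSupIndep W ∧ (⨆ i, W i) = ⊤ ∧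
        (∀ i, IsStrictOpenCone (Cs i) ∧ ¬ IsDecomposableCone (Cs i)) ∧
        C = {v : V | ∃ f : (i : Fin s) → W i,
              (∀ i, f i ∈ Cs i) ∧ v = ∑ i, (f i : V)} := by
  induction n with
  | zero =>
    intro V _ _ _ C hC hspan hrank
    by_cases hdec : IsDecomposableCone C
    · exfalso
      obtain ⟨W₁, W₂, C₁, C₂, hb1, hb2, hcompl, _⟩ := hdec
      have hsub : Subsingleton V :=
        Module.finrank_zero_iff.mp (Nat.le_zero.mp hrank)
      exact hb1 (by
        rw [Submodule.eq_bot_iff]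
        intro x _
        exact Subsingleton.elim x 0)
    · exact indec_case C hC hdec
  | succ n ih =>
    intro V instV instW instF C hC hspan hrank
    by_cases hdec : IsDecomposableCone C
    · obtain ⟨W₁, W₂, C₁, C₂, hb1, hb2, hcompl, hs1, hs2, hn1, hn2, hc1, hc2,
        hr1, hr2, hz1, hz2, hsum⟩ := hdec
      have hsum' : C = C₂ + C₁ := by rw [hsum, add_comm]
      obtain ⟨hso1, hsp1, hval1⟩ :=
        pieces hC hspan hcompl hs1 hs2 hn2 hr1 hr2 hsum
      obtain ⟨hso2, hsp2, hval2⟩ :=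
        pieces hC hspan hcompl.symm hs2 hs1 hn1 hr2 hr1 hsum'
      have hW₁lt : W₁ < ⊤ := lt_top_iff_ne_top.mpr (fun h => hb2
        (disjoint_top.mp ((h ▸ hcompl.disjoint).symm)))
      have hW₂lt : W₂ < ⊤ := lt_top_iff_ne_top.mpr (fun h => hb1
        (disjoint_top.mp ((h ▸ hcompl.symm.disjoint).symm)))
      have h1n : Module.finrank ℝ W₁ ≤ n :=
        Nat.lt_succ_iff.mp (lt_of_lt_of_le (Submodule.finrank_lt hW₁lt.ne) hrank)
      have h2n : Module.finrank ℝ W₂ ≤ n :=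
        Nat.lt_succ_iff.mp (lt_of_lt_of_le (Submodule.finrank_lt hW₂lt.ne) hrank)
      obtain ⟨s₁, U₁, E₁, hind₁, hsup₁, hpr₁, hset₁⟩ := ih ↥W₁ _ hso1 hsp1 h1n
      obtain ⟨s₂, U₂, E₂, hind₂, hsup₂, hpr₂, hset₂⟩ := ih ↥W₂ _ hso2 hsp2 h2n
      -- the combined data over the sum type
      let cve₁ : ∀ a : Fin s₁, (U₁ a) ≃L[ℝ] ↥((U₁ a).map W₁.subtype) := fun a =>
        (Submodule.equivMapOfInjective W₁.subtype W₁.injective_subtype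
          (U₁ a)).toContinuousLinearEquiv
      let cve₂ : ∀ b : Fin s₂, (U₂ b) ≃L[ℝ] ↥((U₂ b).map W₂.subtype) := fun b =>
        (Submodule.equivMapOfInjective W₂.subtype W₂.injective_subtype
          (U₂ b)).toContinuousLinearEquiv
      have hcoe₁ : ∀ (a : Fin s₁) (x : U₁ a),
          ((cve₁ a x : ↥((U₁ a).map W₁.subtype)) : V) = ((x : ↥W₁) : V) :=
        fun a x => Submodule.coe_equivMapOfInjective_apply _ _ _ _
      have hcoe₂ : ∀ (b : Fin s₂) (x : U₂ b),
          ((cve₂ b x : ↥((U₂ b).map W₂.subtype)) : V) = ((x : ↥W₂) : V) :=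
        fun b x => Submodule.coe_equivMapOfInjective_apply _ _ _ _
      let W' : Fin s₁ ⊕ Fin s₂ → Submodule ℝ V :=
        Sum.elim (fun a => (U₁ a).map W₁.subtype) (fun b => (U₂ b).map W₂.subtype)
      let Cs' : ∀ j, Set (W' j) := fun j =>
        match j with
        | .inl a => ⇑(cve₁ a) '' E₁ a
        | .inr b => ⇑(cve₂ b) '' E₂ b
      -- independence
      have hind' : iSupIndep W' := by
        rw [iSupIndep_def]
        intro j
        cases j with
        | inl a =>
          have hle : (⨆ j', ⨆ (_ : j' ≠ Sum.inl a), W' j') ≤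
              ((⨆ a', ⨆ (_ : a' ≠ a), U₁ a').map W₁.subtype) ⊔ W₂ := by
            refine iSup_le fun j' => iSup_le fun hj' => ?_
            cases j' with
            | inl a' =>
              have ha' : a' ≠ a := fun h => hj' (by rw [h])
              exact le_sup_of_le_left (Submodule.map_mono
                (le_iSup_of_le a' (le_iSup_of_le ha' le_rfl)))
            | inr b =>
              exact le_sup_of_le_right (Submodule.map_subtype_le _ _)
          exact (combine_disjoint hcompl.disjoint (U₁ a) _
            (iSupIndep_def.mp hind₁ a) W₂ le_rfl).mono_right hle
        | inr b =>
          have hle : (⨆ j', ⨆ (_ : j' ≠ Sum.inr b), W' j') ≤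
              ((⨆ b', ⨆ (_ : b' ≠ b), U₂ b').map W₂.subtype) ⊔ W₁ := by
            refine iSup_le fun j' => iSup_le fun hj' => ?_
            cases j' with
            | inr b' =>
              have hb' : b' ≠ b := fun h => hj' (by rw [h])
              exact le_sup_of_le_left (Submodule.map_mono
                (le_iSup_of_le b' (le_iSup_of_le hb' le_rfl)))
            | inl a =>
              exact le_sup_of_le_right (Submodule.map_subtype_le _ _)
          exact (combine_disjoint hcompl.disjoint.symm (U₂ b) _
            (iSupIndep_def.mp hind₂ b) W₁ le_rfl).mono_right hle
      -- supremum is everything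
      have hsup' : (⨆ j, W' j) = ⊤ := by
        rw [iSup_sum]
        have l1 : (⨆ a, W' (Sum.inl a)) = W₁ := by
          show (⨆ a, (U₁ a).map W₁.subtype) = W₁
          rw [← Submodule.map_iSup, hsup₁, Submodule.map_subtype_top]
        have l2 : (⨆ b, W' (Sum.inr b)) = W₂ := by
          show (⨆ b, (U₂ b).map W₂.subtype) = W₂
          rw [← Submodule.map_iSup, hsup₂, Submodule.map_subtype_top]
        rw [l1, l2]
        exact codisjoint_iff.mp hcompl.codisjoint
      -- each piece is a strict indecomposable cone
      have hpr' : ∀ j, IsStrictOpenCone (Cs' j) ∧ ¬ IsDecomposableCone (Cs' j) := by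
        intro j
        cases j with
        | inl a =>
          exact ⟨strict_map (cve₁ a) (hpr₁ a).1,
            fun h => (hpr₁ a).2 (decomp_map (cve₁ a).toLinearEquiv h)⟩
        | inr b =>
          exact ⟨strict_map (cve₂ b) (hpr₂ b).1,
            fun h => (hpr₂ b).2 (decomp_map (cve₂ b).toLinearEquiv h)⟩
      -- the sum-set description over the sum type
      have hmain : C = {v : V | ∃ g : ∀ j, W' j,
          (∀ j, g j ∈ Cs' j) ∧ v = ∑ j, (g j : V)} := by
        ext v
        simp only [Set.mem_setOf_eq]
        constructor
        · intro hv
          rw [hsum] at hv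
          obtain ⟨c₁, hc₁, c₂, hc₂, rfl⟩ := hv
          rw [← hval1] at hc₁
          obtain ⟨d₁, hd₁, rfl⟩ := hc₁
          rw [← hval2] at hc₂
          obtain ⟨d₂, hd₂, rfl⟩ := hc₂
          rw [hset₁] at hd₁
          obtain ⟨f₁, hf₁, hf₁s⟩ := hd₁
          rw [hset₂] at hd₂
          obtain ⟨f₂, hf₂, hf₂s⟩ := hd₂
          refine ⟨fun j => match j with
            | .inl a => cve₁ a (f₁ a)
            | .inr b => cve₂ b (f₂ b), ?_, ?_⟩
          · intro j
            cases j with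
            | inl a => exact Set.mem_image_of_mem _ (hf₁ a)
            | inr b => exact Set.mem_image_of_mem _ (hf₂ b)
          · rw [Fintype.sum_sum_type]
            have e1 : ∑ a, ((cve₁ a (f₁ a) : ↥((U₁ a).map W₁.subtype)) : V) =
                (d₁ : V) := by
              rw [hf₁s, Submodule.coe_sum]
              exact Finset.sum_congr rfl fun a _ => hcoe₁ a (f₁ a)
            have e2 : ∑ b, ((cve₂ b (f₂ b) : ↥((U₂ b).map W₂.subtype)) : V) =
                (d₂ : V) := by
              rw [hf₂s, Submodule.coe_sum]
              exact Finset.sum_congr rfl fun b _ => hcoe₂ b (f₂ b)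
            rw [← e1, ← e2]
        · rintro ⟨g, hg, rfl⟩
          have hmem₁ : ∀ a, (cve₁ a).symm (g (.inl a)) ∈ E₁ a := by
            intro a
            obtain ⟨x, hx, hxe⟩ := hg (.inl a)
            rw [← hxe]
            simpa using hx
          have hmem₂ : ∀ b, (cve₂ b).symm (g (.inr b)) ∈ E₂ b := by
            intro b
            obtain ⟨x, hx, hxe⟩ := hg (.inr b)
            rw [← hxe]
            simpa using hx
          set d₁ : ↥W₁ := ∑ a, (((cve₁ a).symm (g (.inl a)) : U₁ a) : ↥W₁) with hd₁def
          set d₂ : ↥W₂ := ∑ b, (((cve₂ b).symm (g (.inr b)) : U₂ b) : ↥W₂) with hd₂def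
          have hd₁ : (d₁ : V) ∈ C₁ := by
            rw [← hval1]
            exact ⟨d₁, by rw [hset₁]; exact ⟨_, hmem₁, rfl⟩, rfl⟩
          have hd₂ : (d₂ : V) ∈ C₂ := by
            rw [← hval2]
            exact ⟨d₂, by rw [hset₂]; exact ⟨_, hmem₂, rfl⟩, rfl⟩
          have hgl : ∀ a, ((g (.inl a) : ↥(W' (Sum.inl a))) : V) =
              ((((cve₁ a).symm (g (.inl a)) : U₁ a) : ↥W₁) : V) := by
            intro a
            conv_lhs => rw [← (cve₁ a).apply_symm_apply (g (.inl a))]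
            exact hcoe₁ a _
          have hgr : ∀ b, ((g (.inr b) : ↥(W' (Sum.inr b))) : V) =
              ((((cve₂ b).symm (g (.inr b)) : U₂ b) : ↥W₂) : V) := by
            intro b
            conv_lhs => rw [← (cve₂ b).apply_symm_apply (g (.inr b))]
            exact hcoe₂ b _
          have hsumeq : ∑ j, ((g j : ↥(W' j)) : V) = (d₁ : V) + (d₂ : V) := by
            rw [Fintype.sum_sum_type, hd₁def, hd₂def, Submodule.coe_sum,
              Submodule.coe_sum]
            rw [Finset.sum_congr rfl fun a _ => hgl a,
              Finset.sum_congr rfl fun b _ => hgr b]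
          rw [hsumeq, hsum]
          exact Set.add_mem_add hd₁ hd₂
      -- reindex along `finSumFinEquiv`
      refine ⟨s₁ + s₂, fun i => W' (finSumFinEquiv.symm i),
        fun i => Cs' (finSumFinEquiv.symm i), ?_, ?_, fun i => hpr' _, ?_⟩
      · exact hind'.comp finSumFinEquiv.symm.injective
      · rw [Equiv.iSup_comp finSumFinEquiv.symm]
        exact hsup'
      · rw [hmain, reindex finSumFinEquiv W' Cs']
    · exact indec_case C hC hdec

/-- Every strict open cone `C` spanning a finite-dimensional
real vector space `V` admits a decomposition `C = C₁ ⊕ ⋯ ⊕ C_s` into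
indecomposable strict open cones `C_i ⊆ V_i` with respect to a direct sum
decomposition `V = V₁ ⊕ ⋯ ⊕ V_s`. -/
theorem stmt_11 (V : Type*) [NormedAddCommGroup V] [NormedSpace ℝ V]
    [FiniteDimensional ℝ V]
    (C : Set V) (hC : IsStrictOpenCone C)
    (hspan : Submodule.span ℝ C = ⊤) :
    ∃ (s : ℕ) (W : Fin s → Submodule ℝ V) (Cs : (i : Fin s) → Set (W i)),
      iSupIndep W ∧ (⨆ i, W i) = ⊤ ∧
      (∀ i, IsStrictOpenCone (Cs i) ∧ ¬ IsDecomposableCone (Cs i)) ∧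
      C = {v : V | ∃ f : (i : Fin s) → W i,
            (∀ i, f i ∈ Cs i) ∧ v = ∑ i, (f i : V)} :=
  key (Module.finrank ℝ V) V C hC hspan le_rfl
end

section
/- Let C be a strict open cone in a finite-dimensional real vector space V spanning V, and suppose C = C₁ ⊕ ... ⊕ C_s is a decomposition into indecomposable strict open cones C_i ⊆ V_i with respect to a direct sum decomposition V = V₁ ⊕ ... ⊕ V_s. Then the subgroup of Aut(C) consisting of those linear automorphisms of V that preserve each summand V_i and restrict on each V_i to an element of Aut(C_i) — a subgroup isomorphic to the product ∏_i Aut(C_i) — has finite index in Aut(C). -/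
open scoped Pointwise

set_option linter.unusedSectionVars false
open Submodule

lemma image_add_set {M N : Type*} [AddCommGroup M] [Module ℝ M] [AddCommGroup N] [Module ℝ N]
    (f : M →ₗ[ℝ] N) (A B : Set M) : f '' (A + B) = f '' A + f '' B := by
  ext x
  constructor
  · rintro ⟨y, ⟨a, ha, b, hb, rfl⟩, rfl⟩
    exact ⟨f a, ⟨a, ha, rfl⟩, f b, ⟨b, hb, rfl⟩, (map_add f a b).symm⟩
  · rintro ⟨-, ⟨a, ha, rfl⟩, -, ⟨b, hb, rfl⟩, rfl⟩
    exact ⟨a + b, ⟨a, ha, b, hb, rfl⟩, map_add f a b⟩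

lemma IsDecomposableCone.of_image {M N : Type*} [AddCommGroup M] [Module ℝ M]
    [AddCommGroup N] [Module ℝ N] (e : M ≃ₗ[ℝ] N) {S : Set M}
    (h : IsDecomposableCone (e '' S)) : IsDecomposableCone S := by
  obtain ⟨W₁, W₂, C₁, C₂, h1, h2, hcompl, hs1, hs2, hne1, hne2, hc1, hc2, hr1, hr2, h01, h02,
    heq⟩ := h
  have hES : S = e.symm '' (e '' S) := by
    rw [Set.image_image]; simp
  refine ⟨map (e.symm : N →ₗ[ℝ] M) W₁, map (e.symm : N →ₗ[ℝ] M) W₂,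
    e.symm '' C₁, e.symm '' C₂, ?_, ?_, ?_, ?_, ?_, hne1.image _, hne2.image _,
    hc1.linear_image (e.symm : N →ₗ[ℝ] M), hc2.linear_image (e.symm : N →ₗ[ℝ] M),
    ?_, ?_, ?_, ?_, ?_⟩
  · intro hb
    apply h1
    rw [eq_bot_iff]; intro x hx
    have : e.symm x ∈ map (e.symm : N →ₗ[ℝ] M) W₁ := ⟨x, hx, rfl⟩
    rw [hb, Submodule.mem_bot] at this
    simpa using congrArg e this
  · intro hb
    apply h2
    rw [eq_bot_iff]; intro x hx
    have : e.symm x ∈ map (e.symm : N →ₗ[ℝ] M) W₂ := ⟨x, hx, rfl⟩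
    rw [hb, Submodule.mem_bot] at this
    simpa using congrArg e this
  · exact (Submodule.orderIsoMapComap (e.symm : N ≃ₗ[ℝ] M)).isCompl hcompl
  · rw [Submodule.map_coe]; exact Set.image_mono hs1
  · rw [Submodule.map_coe]; exact Set.image_mono hs2
  · intro r hr v hv
    obtain ⟨w, hw, rfl⟩ := hv
    exact ⟨r • w, hr1 r hr w hw, map_smul _ _ _⟩
  · intro r hr v hv
    obtain ⟨w, hw, rfl⟩ := hv
    exact ⟨r • w, hr2 r hr w hw, map_smul _ _ _⟩
  · rintro ⟨w, hw, hw0⟩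
    exact h01 (by rwa [← (map_eq_zero_iff _ e.symm.injective).1 hw0])
  · rintro ⟨w, hw, hw0⟩
    exact h02 (by rwa [← (map_eq_zero_iff _ e.symm.injective).1 hw0])
  · rw [hES, heq]
    exact image_add_set (e.symm : N →ₗ[ℝ] M) C₁ C₂

section Core
variable {V : Type*} [NormedAddCommGroup V] [NormedSpace ℝ V] [FiniteDimensional ℝ V]


lemma sum_unique {s : ℕ} {W : Fin s → Submodule ℝ V} (hindep : iSupIndep W)
    {f g : Fin s → V} (hf : ∀ i, f i ∈ W i) (hg : ∀ i, g i ∈ W i)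
    (h : ∑ i, f i = ∑ i, g i) : f = g := by
  funext i
  have hd : ∀ j, f j - g j ∈ W j := fun j => sub_mem (hf j) (hg j)
  have hsum : ∑ j, (f j - g j) = 0 := by
    rw [Finset.sum_sub_distrib, h, sub_self]
  have h1 : f i - g i ∈ ⨆ (j) (_ : j ≠ i), W j := by
    have h2 : (f i - g i) + ∑ j ∈ Finset.univ.erase i, (f j - g j) = 0 := by
      rw [Finset.add_sum_erase Finset.univ (fun j => f j - g j) (Finset.mem_univ i)]
      exact hsum
    rw [eq_neg_of_add_eq_zero_left h2]
    exact neg_mem (Submodule.sum_mem _ (fun j hj =>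
      Submodule.mem_iSup_of_mem j (Submodule.mem_iSup_of_mem (Finset.mem_erase.1 hj).1 (hd j))))
  have := (hindep i).le_bot ⟨hd i, h1⟩
  rw [Submodule.mem_bot] at this
  exact sub_eq_zero.1 this

lemma exists_projs {s : ℕ} (W : Fin s → Submodule ℝ V) (hindep : iSupIndep W)
    (hsup : (⨆ i, W i) = ⊤) :
    ∃ π : Fin s → (V →ₗ[ℝ] V), (∀ i v, π i v ∈ W i) ∧
      (∀ i j, ∀ w ∈ W j, π i w = if i = j then w else 0) ∧
      (∀ v, ∑ i, π i v = v) := by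
  classical
  set T : ((i : Fin s) → W i) →ₗ[ℝ] V := ∑ i, (W i).subtype ∘ₗ LinearMap.proj i with hT
  have hTapp : ∀ f, T f = ∑ i, (f i : V) := by
    intro f
    simp [hT, LinearMap.sum_apply]
  have hTsingle : ∀ (j : Fin s) (x : W j), T (Pi.single j x) = x := by
    intro j x
    rw [hTapp, Finset.sum_eq_single j]
    · simp
    · intro b _ hb; simp [Pi.single_apply, hb]
    · simp
  have hinj : Function.Injective T := by
    intro f g hfg
    have := sum_unique hindep (f := fun i => ((f i : V))) (g := fun i => ((g i : V)))
      (fun i => (f i).2) (fun i => (g i).2) (by rw [← hTapp, ← hTapp, hfg])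
    funext i
    exact Subtype.ext (congrFun this i)
  have hsurj : Function.Surjective T := by
    rw [← LinearMap.range_eq_top]
    rw [eq_top_iff, ← hsup]
    refine iSup_le fun i => fun w hw => ⟨Pi.single i ⟨w, hw⟩, hTsingle i ⟨w, hw⟩⟩
  set E : ((i : Fin s) → W i) ≃ₗ[ℝ] V := LinearEquiv.ofBijective T ⟨hinj, hsurj⟩ with hE
  have hEapp : ∀ f, E f = T f := fun f => rfl
  have hEsym : ∀ (j : Fin s) (x : W j), E.symm (x : V) = Pi.single j x := by
    intro j x
    apply E.injective
    rw [E.apply_symm_apply, hEapp, hTsingle]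
  refine ⟨fun i => (W i).subtype.comp ((LinearMap.proj i).comp (E.symm.toLinearMap)), ?_, ?_, ?_⟩
  · intro i v
    exact ((E.symm v) i).2
  · intro i j w hw
    simp only [LinearMap.comp_apply, LinearEquiv.coe_coe]
    rw [hEsym j ⟨w, hw⟩]
    by_cases h : i = j
    · subst h; simp
    · simp [LinearMap.proj_apply, Pi.single_apply, Ne.symm h, h]
  · intro v
    have : ∑ i, ((E.symm v) i : V) = T (E.symm v) := (hTapp _).symm
    simp only [LinearMap.comp_apply, LinearEquiv.coe_coe, LinearMap.proj_apply]
    show ∑ i : Fin s, ((E.symm v i : V)) = v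
    rw [this, ← hEapp, E.apply_symm_apply]

lemma comp_mem {s : ℕ} {W : Fin s → Submodule ℝ V} {D : Fin s → Set V} {C : Set V}
    (π : Fin s → (V →ₗ[ℝ] V))
    (hπ2 : ∀ i j, ∀ w ∈ W j, π i w = if i = j then w else 0)
    (hDW : ∀ i, D i ⊆ (W i : Set V))
    (hCD : C = {v | ∃ f : Fin s → V, (∀ i, f i ∈ D i) ∧ v = ∑ i, f i}) :
    ∀ c ∈ C, ∀ i, π i c ∈ D i := by
  intro c hc i
  rw [hCD] at hc
  obtain ⟨f, hf, rfl⟩ := hc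
  rw [map_sum, Finset.sum_eq_single i]
  · rw [hπ2 i i (f i) (hDW i (hf i)), if_pos rfl]; exact hf i
  · intro j _ hj
    rw [hπ2 i j (f j) (hDW j (hf j)), if_neg (Ne.symm hj)]
  · simp

lemma D_subset_closure {s : ℕ} {D : Fin s → Set V} {C : Set V}
    (hDne : ∀ i, (D i).Nonempty)
    (hDcone : ∀ i, ∀ r : ℝ, 0 < r → ∀ v ∈ D i, r • v ∈ D i)
    (hCD : C = {v | ∃ f : Fin s → V, (∀ i, f i ∈ D i) ∧ v = ∑ i, f i}) :
    ∀ i, D i ⊆ closure C := by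
  classical
  intro i d hd
  set t : V := ∑ k ∈ Finset.univ.erase i, (hDne k).some with ht
  have hseq : ∀ n : ℕ, d + (1 / (n + 1) : ℝ) • t ∈ C := by
    intro n
    have hpos : (0:ℝ) < 1 / (n + 1) := by positivity
    rw [hCD]
    refine ⟨fun k => if h : k = i then d else (1 / (n + 1) : ℝ) • (hDne k).some, fun k => ?_, ?_⟩
    · by_cases h : k = i
      · subst h; simpa using hd
      · simpa [h] using hDcone k _ hpos _ (hDne k).some_mem
    · rw [← Finset.add_sum_erase Finset.univ _ (Finset.mem_univ i)]
      simp only [dif_pos rfl]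
      congr 1
      rw [ht, Finset.smul_sum]
      exact Finset.sum_congr rfl (fun k hk => by rw [dif_neg (Finset.mem_erase.1 hk).1])
  have htend : Filter.Tendsto (fun n : ℕ => d + (1 / (n + 1) : ℝ) • t) Filter.atTop
      (nhds d) := by
    have h1 : Filter.Tendsto (fun n : ℕ => (1 / (n + 1) : ℝ)) Filter.atTop (nhds 0) :=
      tendsto_one_div_add_atTop_nhds_zero_nat
    have := (h1.smul_const t).const_add d
    simpa using this
  exact mem_closure_of_tendsto htend (Filter.Eventually.of_forall hseq)

lemma span_comp {s : ℕ} {W : Fin s → Submodule ℝ V} {D : Fin s → Set V} {C : Set V}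
    (π : Fin s → (V →ₗ[ℝ] V))
    (hπ2 : ∀ i j, ∀ w ∈ W j, π i w = if i = j then w else 0)
    (hDW : ∀ i, D i ⊆ (W i : Set V))
    (hCD : C = {v | ∃ f : Fin s → V, (∀ i, f i ∈ D i) ∧ v = ∑ i, f i})
    (hspan : span ℝ C = ⊤) :
    ∀ i, span ℝ (D i) = W i := by
  intro i
  refine le_antisymm (span_le.2 (hDW i)) ?_
  have htop : (⊤ : Submodule ℝ V) ≤ ⨆ j, span ℝ (D j) := by
    rw [← hspan]
    refine span_le.2 (fun c hc => ?_)
    rw [hCD] at hc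
    obtain ⟨f, hf, rfl⟩ := hc
    exact Submodule.sum_mem _ (fun j _ =>
      Submodule.mem_iSup_of_mem j (subset_span (hf j)))
  intro w hw
  have hw' : w ∈ ⨆ j, span ℝ (D j) := htop trivial
  have h1 : π i w ∈ Submodule.map (π i) (⨆ j, span ℝ (D j)) := ⟨w, hw', rfl⟩
  rw [Submodule.map_iSup] at h1
  have h2 : (⨆ j, Submodule.map (π i) (span ℝ (D j))) ≤ span ℝ (D i) := by
    refine iSup_le (fun j => ?_)
    rw [Submodule.map_span]
    refine span_le.2 ?_
    rintro x ⟨d, hd, rfl⟩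
    by_cases h : i = j
    · subst h
      rw [hπ2 i i d (hDW i hd), if_pos rfl]
      exact subset_span hd
    · rw [hπ2 i j d (hDW j hd), if_neg h]
      exact zero_mem _
  have h3 : π i w = w := by rw [hπ2 i i w hw, if_pos rfl]
  rw [← h3]
  exact h2 h1
set_option maxHeartbeats 1000000 in
lemma core (C : Set V) (hC : IsStrictOpenCone C) (hspan : span ℝ C = ⊤)
    {s t : ℕ} (W : Fin s → Submodule ℝ V) (U : Fin t → Submodule ℝ V)
    (hWind : iSupIndep W) (hWsup : (⨆ i, W i) = ⊤)
    (hUind : iSupIndep U) (hUsup : (⨆ j, U j) = ⊤)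
    (D : Fin s → Set V) (E : Fin t → Set V)
    (hDW : ∀ i, D i ⊆ (W i : Set V)) (hEU : ∀ j, E j ⊆ (U j : Set V))
    (hDne : ∀ i, (D i).Nonempty) (hEne : ∀ j, (E j).Nonempty)
    (hDconv : ∀ i, Convex ℝ (D i))
    (hDcone : ∀ i, ∀ r : ℝ, 0 < r → ∀ v ∈ D i, r • v ∈ D i)
    (hEcone : ∀ j, ∀ r : ℝ, 0 < r → ∀ v ∈ E j, r • v ∈ E j)
    (hDopen : ∀ i, ∀ d ∈ D i, ∀ d₀ ∈ D i, ∃ ε : ℝ, 0 < ε ∧ d + ε • (d - d₀) ∈ D i)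
    (hDind : ∀ i, ¬ IsDecomposableCone ((W i).subtype ⁻¹' (D i)))
    (hCD : C = {v | ∃ f : Fin s → V, (∀ i, f i ∈ D i) ∧ v = ∑ i, f i})
    (hCE : C = {v | ∃ f : Fin t → V, (∀ j, f j ∈ E j) ∧ v = ∑ j, f j}) :
    ∀ i, W i ≠ ⊥ → ∃ j, W i ≤ U j := by
  classical
  obtain ⟨π, hπ1, hπ2, hπ3⟩ := exists_projs W hWind hWsup
  obtain ⟨ρ, hρ1, hρ2, hρ3⟩ := exists_projs U hUind hUsup
  have hπD := comp_mem π hπ2 hDW hCD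
  have hρE := comp_mem ρ hρ2 hEU hCE
  have hDK := D_subset_closure hDne hDcone hCD
  have hEK := D_subset_closure hEne hEcone hCE
  have hspanD := span_comp π hπ2 hDW hCD hspan
  set K := closure C with hK
  have hKpoint : ∀ x, x ∈ K → -x ∈ K → x = 0 := by
    intro x hx hnx
    have h2 : x ∈ closure (-C) := by
      obtain ⟨u, hu, hux⟩ := mem_closure_iff_seq_limit.1 hnx
      have : Filter.Tendsto (fun n => -(u n)) Filter.atTop (nhds x) := by
        simpa using hux.neg
      exact mem_closure_of_tendsto this
        (Filter.Eventually.of_forall fun n => Set.neg_mem_neg.2 (hu n))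
    exact hC.2.2.2.2 ⟨hx, h2⟩
  have hCadd : ∀ x ∈ C, ∀ y ∈ C, x + y ∈ C := by
    intro x hx y hy
    have hmid : (1/2 : ℝ) • x + (1/2 : ℝ) • y ∈ C :=
      hC.2.1 hx hy (by norm_num) (by norm_num) (by norm_num)
    have h2 := hC.2.2.2.1 2 (by norm_num) _ hmid
    rw [smul_add, smul_smul, smul_smul] at h2
    norm_num at h2
    exact h2
  have hK0 : (0 : V) ∈ K := by
    obtain ⟨c, hc⟩ := hC.2.2.1
    have htend : Filter.Tendsto (fun n : ℕ => (1 / (n + 1) : ℝ) • c) Filter.atTop (nhds 0) := by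
      have h1 : Filter.Tendsto (fun n : ℕ => (1 / (n + 1) : ℝ)) Filter.atTop (nhds 0) :=
        tendsto_one_div_add_atTop_nhds_zero_nat
      simpa using h1.smul_const c
    exact mem_closure_of_tendsto htend (Filter.Eventually.of_forall fun n =>
      hC.2.2.2.1 _ (by positivity) _ hc)
  have hKadd : ∀ x ∈ K, ∀ y ∈ K, x + y ∈ K := by
    intro x hx y hy
    obtain ⟨u, hu, hux⟩ := mem_closure_iff_seq_limit.1 hx
    obtain ⟨w, hw, hwy⟩ := mem_closure_iff_seq_limit.1 hy
    exact mem_closure_of_tendsto (hux.add hwy)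
      (Filter.Eventually.of_forall fun n => hCadd _ (hu n) _ (hw n))
  have hKsmul : ∀ r : ℝ, 0 < r → ∀ x ∈ K, r • x ∈ K := by
    intro r hr x hx
    obtain ⟨u, hu, hux⟩ := mem_closure_iff_seq_limit.1 hx
    exact mem_closure_of_tendsto (hux.const_smul r)
      (Filter.Eventually.of_forall fun n => hC.2.2.2.1 r hr _ (hu n))
  have hKsum : ∀ (T : Finset (Fin t)) (f : Fin t → V), (∀ j ∈ T, f j ∈ K) →
      ∑ j ∈ T, f j ∈ K := by
    intro T
    induction T using Finset.induction with
    | empty => intro f _; simpa using hK0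
    | @insert a T ha ih =>
      intro f hf
      rw [Finset.sum_insert ha]
      exact hKadd _ (hf _ (Finset.mem_insert_self _ _)) _
        (ih f fun j hjT => hf j (Finset.mem_insert_of_mem hjT))
  have hclDK : ∀ i, closure (D i) ⊆ K := fun i => closure_minimal (hDK i) isClosed_closure
  have hclEK : ∀ j, closure (E j) ⊆ K := fun j => closure_minimal (hEK j) isClosed_closure
  have hπK : ∀ x ∈ K, ∀ i, π i x ∈ closure (D i) := by
    intro x hx i
    have hcont : Continuous (π i) := (π i).continuous_of_finiteDimensional
    have h2 : π i '' closure C ⊆ closure (π i '' C) := image_closure_subset_closure_image hcont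
    have h3 : closure (π i '' C) ⊆ closure (D i) :=
      closure_mono (by rintro y ⟨c, hc', rfl⟩; exact hπD c hc' i)
    exact h3 (h2 ⟨x, hx, rfl⟩)
  have hρK : ∀ x ∈ K, ∀ j, ρ j x ∈ closure (E j) := by
    intro x hx j
    have hcont : Continuous (ρ j) := (ρ j).continuous_of_finiteDimensional
    have h2 : ρ j '' closure C ⊆ closure (ρ j '' C) := image_closure_subset_closure_image hcont
    have h3 : closure (ρ j '' C) ⊆ closure (E j) :=
      closure_mono (by rintro y ⟨c, hc', rfl⟩; exact hρE c hc' j)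
    exact h3 (h2 ⟨x, hx, rfl⟩)
  have hface : ∀ (i : Fin s), ∀ x ∈ K, ∀ y ∈ K, x + y ∈ W i → x ∈ W i ∧ y ∈ W i := by
    intro i x hx y hy hxy
    have hcomp0 : ∀ k, k ≠ i → π k x = 0 ∧ π k y = 0 := by
      intro k hk
      have h1 : π k x + π k y = 0 := by
        rw [← map_add, hπ2 k i _ hxy, if_neg hk]
      have hxk : π k x ∈ K := hclDK k (hπK x hx k)
      have hyk : π k y ∈ K := hclDK k (hπK y hy k)
      have h0 : π k x = 0 := hKpoint _ hxk (by rw [neg_eq_of_add_eq_zero_right h1]; exact hyk)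
      exact ⟨h0, by rw [h0, zero_add] at h1; exact h1⟩
    have hxe : x = π i x := by
      conv_lhs => rw [← hπ3 x]
      rw [Finset.sum_eq_single i]
      · intro k _ hk; exact (hcomp0 k hk).1
      · simp
    have hye : y = π i y := by
      conv_lhs => rw [← hπ3 y]
      rw [Finset.sum_eq_single i]
      · intro k _ hk; exact (hcomp0 k hk).2
      · simp
    exact ⟨hxe ▸ hπ1 i x, hye ▸ hπ1 i y⟩
  have hρW : ∀ (i : Fin s), ∀ d ∈ D i, ∀ j, ρ j d ∈ K ∧ ρ j d ∈ W i := by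
    intro i d hd
    have hdK : d ∈ K := hDK i hd
    have hjK : ∀ j, ρ j d ∈ K := fun j => hclEK j (hρK d hdK j)
    have claim : ∀ T : Finset (Fin t), (∑ j ∈ T, ρ j d) ∈ W i → ∀ j ∈ T, ρ j d ∈ W i := by
      intro T
      induction T using Finset.induction with
      | empty => simp
      | @insert a T ha ih =>
        intro hsum j hj
        rw [Finset.sum_insert ha] at hsum
        have h1 := hface i _ (hjK a) _ (hKsum T _ (fun k _ => hjK k)) hsum
        rcases Finset.mem_insert.1 hj with rfl | hj'
        · exact h1.1
        · exact ih h1.2 j hj'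
    intro j
    refine ⟨hjK j, claim Finset.univ ?_ j (Finset.mem_univ j)⟩
    rw [hρ3 d]
    exact hDW i hd
  have hdich : ∀ (i : Fin s) (j : Fin t), (∀ d ∈ D i, ρ j d = 0) ∨ (∀ d ∈ D i, ρ j d ≠ 0) := by
    intro i j
    by_cases h : ∀ d ∈ D i, ρ j d = 0
    · exact Or.inl h
    push_neg at h
    obtain ⟨d₀, hd₀, hd₀0⟩ := h
    refine Or.inr (fun d hd h0 => ?_)
    obtain ⟨ε, hε, hd'⟩ := hDopen i d hd d₀ hd₀
    have hρd' : ρ j (d + ε • (d - d₀)) = -(ε • ρ j d₀) := by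
      rw [map_add, map_smul, map_sub, h0]
      simp
    have h1 : ρ j (d + ε • (d - d₀)) ∈ K := (hρW i _ hd' j).1
    have h2 : ε • ρ j d₀ ∈ K := hKsmul ε hε _ (hρW i d₀ hd₀ j).1
    have h3 := hKpoint _ h2 (by rw [← hρd']; exact h1)
    rcases smul_eq_zero.1 h3 with h4 | h4
    · exact absurd h4 (ne_of_gt hε)
    · exact hd₀0 h4
  have hsumrest : ∀ (j₀ : Fin t) (v : V),
      v - ρ j₀ v = ∑ j ∈ Finset.univ.erase j₀, ρ j v := by
    intro j₀ v
    have h := hρ3 v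
    rw [← Finset.add_sum_erase Finset.univ _ (Finset.mem_univ j₀)] at h
    exact (eq_sub_of_add_eq' h).symm
  -- main argument
  intro i hWi
  have hex : ∃ d₀ ∈ D i, d₀ ≠ 0 := by
    by_contra h
    push_neg at h
    apply hWi
    rw [← hspanD i, eq_bot_iff]
    refine span_le.2 fun d hd => ?_
    rw [h d hd]
    exact zero_mem _
  obtain ⟨d₀, hd₀, hd₀ne⟩ := hex
  have hexj : ∃ j₀, ρ j₀ d₀ ≠ 0 := by
    by_contra h
    push_neg at h
    apply hd₀ne
    rw [← hρ3 d₀]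
    exact Finset.sum_eq_zero (fun j _ => h j)
  obtain ⟨j₀, hj₀⟩ := hexj
  have hgood₀ : ∀ d ∈ D i, ρ j₀ d ≠ 0 := by
    rcases hdich i j₀ with h | h
    · exact absurd (h d₀ hd₀) hj₀
    · exact h
  have hvanish : ∀ j, j ≠ j₀ → ∀ d ∈ D i, ρ j d = 0 := by
    intro j₁ hj₁ne
    rcases hdich i j₁ with h | h
    · exact h
    exfalso
    -- build a decomposition of D i, contradicting indecomposability
    set A₁ : Set V := (ρ j₀) '' (D i) with hA₁def
    set A₂ : Set V := (fun v => v - ρ j₀ v) '' (D i) with hA₂def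
    have hA₁W : ∀ a ∈ A₁, a ∈ W i ∧ a ∈ U j₀ := by
      rintro a ⟨d, hd, rfl⟩
      exact ⟨(hρW i d hd j₀).2, hρ1 j₀ d⟩
    have hA₂W : ∀ a ∈ A₂, a ∈ W i ∧ a ∈ (⨆ j, ⨆ (_ : j ≠ j₀), U j) := by
      rintro a ⟨d, hd, rfl⟩
      dsimp only
      rw [hsumrest j₀ d]
      constructor
      · exact Submodule.sum_mem _ fun j _ => (hρW i d hd j).2
      · exact Submodule.sum_mem _ fun j hj =>
          Submodule.mem_iSup_of_mem j
            (Submodule.mem_iSup_of_mem (Finset.mem_erase.1 hj).1 (hρ1 j d))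
    have hmix : ∀ d ∈ D i, ∀ d' ∈ D i, ρ j₀ d + (d' - ρ j₀ d') ∈ D i := by
      intro d hd d' hd'
      set tt : V := ∑ k ∈ Finset.univ.erase i, (hDne k).some with htt
      have hmemC : ∀ x ∈ D i, x + tt ∈ C := by
        intro x hx
        rw [hCD]
        refine ⟨fun k => if h : k = i then x else (hDne k).some, fun k => ?_, ?_⟩
        · by_cases h : k = i
          · subst h; simpa using hx
          · simpa [h] using (hDne k).some_mem
        · rw [← Finset.add_sum_erase Finset.univ _ (Finset.mem_univ i), dif_pos rfl]
          congr 1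
          exact Finset.sum_congr rfl fun k hk => by rw [dif_neg (Finset.mem_erase.1 hk).1]
      have hc : d + tt ∈ C := hmemC d hd
      have hc' : d' + tt ∈ C := hmemC d' hd'
      have hm : ρ j₀ (d + tt) + ((d' + tt) - ρ j₀ (d' + tt)) ∈ C := by
        rw [hCE]
        refine ⟨fun j => if j = j₀ then ρ j₀ (d + tt) else ρ j (d' + tt), fun j => ?_, ?_⟩
        · by_cases h' : j = j₀
          · subst h'; simpa using hρE _ hc j
          · simpa [h'] using hρE _ hc' j
        · rw [← Finset.add_sum_erase Finset.univ _ (Finset.mem_univ j₀), if_pos rfl]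
          congr 1
          rw [hsumrest j₀ (d' + tt)]
          exact Finset.sum_congr rfl fun j hj => by rw [if_neg (Finset.mem_erase.1 hj).1]
      have hπm := hπD _ hm i
      have hπtt : π i tt = 0 := by
        rw [htt, map_sum]
        refine Finset.sum_eq_zero fun k hk => ?_
        rw [hπ2 i k _ (hDW k (hDne k).some_mem), if_neg (Ne.symm (Finset.mem_erase.1 hk).1)]
      have hπW' : ∀ x ∈ W i, π i x = x := fun x hx => by rw [hπ2 i i x hx, if_pos rfl]
      have hmeq : ρ j₀ (d + tt) + ((d' + tt) - ρ j₀ (d' + tt))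
          = (ρ j₀ d + (d' - ρ j₀ d')) + tt := by
        rw [map_add, map_add]; abel
      rw [hmeq] at hπm
      have hcalc : π i ((ρ j₀ d + (d' - ρ j₀ d')) + tt) = ρ j₀ d + (d' - ρ j₀ d') := by
        rw [map_add, hπtt, add_zero, map_add, map_sub,
          hπW' _ ((hρW i d hd j₀).2), hπW' _ (hDW i hd'), hπW' _ ((hρW i d' hd' j₀).2)]
      rwa [hcalc] at hπm
    have hDeqA : D i = A₁ + A₂ := by
      apply Set.Subset.antisymm
      · intro d hd
        exact ⟨ρ j₀ d, ⟨d, hd, rfl⟩, d - ρ j₀ d, ⟨d, hd, rfl⟩, add_sub_cancel _ _⟩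
      · rintro x ⟨a, ⟨d, hd, rfl⟩, b, ⟨d', hd', rfl⟩, rfl⟩
        exact hmix d hd d' hd'
    have hA₂ne0 : ∀ d ∈ D i, d - ρ j₀ d ≠ 0 := by
      intro d hd h0
      have h1 : ρ j₁ (d - ρ j₀ d) = ρ j₁ d := by
        rw [hsumrest j₀ d, map_sum, Finset.sum_eq_single j₁]
        · rw [hρ2 j₁ j₁ _ (hρ1 j₁ d), if_pos rfl]
        · intro j _ hjne
          rw [hρ2 j₁ j _ (hρ1 j d), if_neg (Ne.symm hjne)]
        · intro hmem
          exact absurd (Finset.mem_erase.2 ⟨hj₁ne, Finset.mem_univ j₁⟩) hmem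
      rw [h0, map_zero] at h1
      exact h d hd h1.symm
    set Z₁ : Submodule ℝ V := W i ⊓ U j₀ with hZ₁def
    set Z₂ : Submodule ℝ V := W i ⊓ (⨆ j, ⨆ (_ : j ≠ j₀), U j) with hZ₂def
    have hZ₁le : Z₁ ≤ W i := inf_le_left
    have hZ₂le : Z₂ ≤ W i := inf_le_left
    have hA₁Z : ∀ a ∈ A₁, a ∈ Z₁ := fun a ha => Submodule.mem_inf.2 (hA₁W a ha)
    have hA₂Z : ∀ a ∈ A₂, a ∈ Z₂ := fun a ha => Submodule.mem_inf.2 (hA₂W a ha)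
    have hZbot : Z₁ ⊓ Z₂ = ⊥ := by
      rw [eq_bot_iff]
      intro x hx
      obtain ⟨h1, h2⟩ := Submodule.mem_inf.1 hx
      exact (hUind j₀).le_bot ⟨(Submodule.mem_inf.1 h1).2, (Submodule.mem_inf.1 h2).2⟩
    have hZsup : Z₁ ⊔ Z₂ = W i := by
      refine le_antisymm (sup_le hZ₁le hZ₂le) ?_
      rw [← hspanD i]
      refine span_le.2 fun d hd => ?_
      have he : d = ρ j₀ d + (d - ρ j₀ d) := by abel
      rw [SetLike.mem_coe, he]
      exact Submodule.add_mem_sup (hA₁Z _ ⟨d, hd, rfl⟩) (hA₂Z _ ⟨d, hd, rfl⟩)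
    apply hDind i
    refine ⟨Submodule.comap (W i).subtype Z₁, Submodule.comap (W i).subtype Z₂,
      (W i).subtype ⁻¹' A₁, (W i).subtype ⁻¹' A₂, ?_, ?_, ?_, ?_, ?_, ?_, ?_, ?_, ?_, ?_,
      ?_, ?_, ?_, ?_⟩
    · -- Z₁' ≠ ⊥
      rw [Submodule.ne_bot_iff]
      refine ⟨⟨ρ j₀ d₀, (hρW i d₀ hd₀ j₀).2⟩, ?_, ?_⟩
      · exact Submodule.mem_comap.2 (hA₁Z _ ⟨d₀, hd₀, rfl⟩)
      · intro h0
        exact hgood₀ d₀ hd₀ (congrArg Subtype.val h0)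
    · rw [Submodule.ne_bot_iff]
      refine ⟨⟨d₀ - ρ j₀ d₀, sub_mem (hDW i hd₀) ((hρW i d₀ hd₀ j₀).2)⟩, ?_, ?_⟩
      · exact Submodule.mem_comap.2 (hA₂Z _ ⟨d₀, hd₀, rfl⟩)
      · intro h0
        exact hA₂ne0 d₀ hd₀ (congrArg Subtype.val h0)
    · -- IsCompl
      rw [isCompl_iff]
      constructor
      · rw [disjoint_iff, ← Submodule.comap_inf, hZbot]
        rw [Submodule.comap_bot, Submodule.ker_subtype]
      · rw [codisjoint_iff]
        apply Submodule.map_injective_of_injective (W i).injective_subtype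
        rw [Submodule.map_sup, Submodule.map_comap_subtype, Submodule.map_comap_subtype,
          Submodule.map_top, Submodule.range_subtype, inf_eq_right.2 hZ₁le,
          inf_eq_right.2 hZ₂le, hZsup]
    · -- C₁ ⊆ Z₁'
      intro x hx
      exact SetLike.mem_coe.2 (Submodule.mem_comap.2 (hA₁Z _ hx))
    · intro x hx
      exact SetLike.mem_coe.2 (Submodule.mem_comap.2 (hA₂Z _ hx))
    · -- nonempty
      refine ⟨⟨ρ j₀ d₀, (hρW i d₀ hd₀ j₀).2⟩, ?_⟩
      exact ⟨d₀, hd₀, rfl⟩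
    · refine ⟨⟨d₀ - ρ j₀ d₀, sub_mem (hDW i hd₀) ((hρW i d₀ hd₀ j₀).2)⟩, ?_⟩
      exact ⟨d₀, hd₀, rfl⟩
    · -- convex C₁
      have hA₁conv : Convex ℝ A₁ := (hDconv i).linear_image (ρ j₀)
      intro x hx y hy a b ha hb hab
      show ((a • x + b • y : (W i)) : V) ∈ A₁
      push_cast
      exact hA₁conv hx hy ha hb hab
    · have hA₂conv : Convex ℝ A₂ := by
        have h1 := (hDconv i).linear_image (LinearMap.id (R := ℝ) (M := V) - ρ j₀)
        have h2 : (LinearMap.id (R := ℝ) (M := V) - ρ j₀) '' (D i) = A₂ := by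
          refine Set.image_congr' (fun x => ?_)
          simp [LinearMap.sub_apply]
        rwa [h2] at h1
      intro x hx y hy a b ha hb hab
      show ((a • x + b • y : (W i)) : V) ∈ A₂
      push_cast
      exact hA₂conv hx hy ha hb hab
    · -- cone C₁
      intro r hr v hv
      obtain ⟨d, hd, hdv⟩ := hv
      show ((r • v : (W i)) : V) ∈ A₁
      push_cast
      refine ⟨r • d, hDcone i r hr d hd, ?_⟩
      rw [map_smul, hdv]
      rfl
    · intro r hr v hv
      obtain ⟨d, hd, hdv⟩ := hv
      show ((r • v : (W i)) : V) ∈ A₂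
      push_cast
      refine ⟨r • d, hDcone i r hr d hd, ?_⟩
      show r • d - ρ j₀ (r • d) = ((r • v : (W i)) : V)
      rw [map_smul, ← smul_sub, show d - ρ j₀ d = (v : V) from hdv]
      rfl
    · -- 0 ∉ C₁
      intro h0
      obtain ⟨d, hd, hdv⟩ := h0
      exact hgood₀ d hd (by simpa using hdv)
    · intro h0
      obtain ⟨d, hd, hdv⟩ := h0
      exact hA₂ne0 d hd (by simpa using hdv)
    · -- equation
      ext x
      constructor
      · intro hx
        have hx' : (x : V) ∈ D i := hx
        rw [hDeqA] at hx'
        obtain ⟨a, ha, b, hb, hab⟩ := hx'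
        refine ⟨⟨a, hZ₁le (hA₁Z a ha)⟩, ha, ⟨b, hZ₂le (hA₂Z b hb)⟩, hb, ?_⟩
        exact Subtype.ext hab
      · rintro ⟨a, ha, b, hb, rfl⟩
        show ((a + b : (W i)) : V) ∈ D i
        rw [hDeqA]
        exact ⟨(a : V), ha, (b : V), hb, by push_cast; rfl⟩
  refine ⟨j₀, ?_⟩
  rw [← hspanD i]
  refine span_le.2 fun d hd => ?_
  have he : d = ρ j₀ d := by
    conv_lhs => rw [← hρ3 d]
    rw [Finset.sum_eq_single j₀]
    · intro j _ hj
      exact hvanish j hj d hd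
    · simp
  rw [SetLike.mem_coe, he]
  exact hρ1 j₀ d


end Core

lemma map_mul_submodule {V : Type*} [AddCommGroup V] [Module ℝ V] (u v : V ≃ₗ[ℝ] V)
    (p : Submodule ℝ V) :
    Submodule.map ((u * v : V ≃ₗ[ℝ] V) : V →ₗ[ℝ] V) p
      = Submodule.map (u : V →ₗ[ℝ] V) (Submodule.map (v : V →ₗ[ℝ] V) p) := by
  ext x
  simp only [Submodule.mem_map]
  constructor
  · rintro ⟨y, hy, rfl⟩
    exact ⟨v y, ⟨y, hy, rfl⟩, rfl⟩
  · rintro ⟨-, ⟨y, hy, rfl⟩, rfl⟩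
    exact ⟨y, hy, rfl⟩

lemma map_one_submodule {V : Type*} [AddCommGroup V] [Module ℝ V] (p : Submodule ℝ V) :
    Submodule.map (((1 : V ≃ₗ[ℝ] V)) : V →ₗ[ℝ] V) p = p := by
  ext x
  simp [Submodule.mem_map]

/-- Let `C = C₁ ⊕ ⋯ ⊕ C_s` be a decomposition of a strict open
cone `C` spanning `V` into indecomposable strict open cones `C_i ⊆ V_i` with
respect to a direct sum decomposition `V = V₁ ⊕ ⋯ ⊕ V_s`.  Then the subgroup of
`Aut(C)` consisting of the linear automorphisms of `V` preserving each summand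
`V_i` and restricting on each `V_i` to an element of `Aut(C_i)` (a subgroup
isomorphic to `∏_i Aut(C_i)`) has finite index in `Aut(C)`.  Here
`Aut(C) = {g ∈ GL(V) : g(C) = C}` is realized as the stabilizer of `C` for the
pointwise action of `GL(V)` on subsets of `V`. -/
theorem stmt_12 (V : Type*) [NormedAddCommGroup V] [NormedSpace ℝ V]
    [FiniteDimensional ℝ V]
    (C : Set V) (hC : IsStrictOpenCone C)
    (hspan : Submodule.span ℝ C = ⊤)
    (s : ℕ) (W : Fin s → Submodule ℝ V) (Cs : (i : Fin s) → Set (W i))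
    (hindep : iSupIndep W) (hsup : (⨆ i, W i) = ⊤)
    (hcones : ∀ i, IsStrictOpenCone (Cs i) ∧ ¬ IsDecomposableCone (Cs i))
    (hdecomp : C = {v : V | ∃ f : (i : Fin s) → W i,
      (∀ i, f i ∈ Cs i) ∧ v = ∑ i, (f i : V)}) :
    (((MulAction.stabilizer (V ≃ₗ[ℝ] V) C) ⊓
        ⨅ i, (MulAction.stabilizer (V ≃ₗ[ℝ] V) ((W i : Set V)) ⊓
              MulAction.stabilizer (V ≃ₗ[ℝ] V) (Subtype.val '' Cs i))).subgroupOf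
      (MulAction.stabilizer (V ≃ₗ[ℝ] V) C)).FiniteIndex := by
  classical
  -- ambient cones
  set D : Fin s → Set V := fun i => Subtype.val '' Cs i with hDdef
  have hDW : ∀ i, D i ⊆ (W i : Set V) := by
    rintro i x ⟨y, hy, rfl⟩; exact y.2
  have hDne : ∀ i, (D i).Nonempty := fun i => ((hcones i).1.2.2.1).image _
  have hDconv : ∀ i, Convex ℝ (D i) := by
    intro i
    have h := ((hcones i).1.2.1).linear_image ((W i).subtype)
    exact h
  have hDcone : ∀ i, ∀ r : ℝ, 0 < r → ∀ v ∈ D i, r • v ∈ D i := by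
    rintro i r hr v ⟨x, hx, rfl⟩
    exact ⟨r • x, (hcones i).1.2.2.2.1 r hr x hx, rfl⟩
  have hDopen : ∀ i, ∀ d ∈ D i, ∀ d₀ ∈ D i, ∃ ε : ℝ, 0 < ε ∧ d + ε • (d - d₀) ∈ D i := by
    rintro i d ⟨x, hx, rfl⟩ d₀ ⟨x₀, hx₀, rfl⟩
    have hcont : Continuous (fun t : ℝ => x + t • (x - x₀)) := by
      exact continuous_const.add (continuous_id.smul continuous_const)
    have h0 : (fun t : ℝ => x + t • (x - x₀)) 0 ∈ Cs i := by simpa using hx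
    have hpre : (fun t : ℝ => x + t • (x - x₀)) ⁻¹' (Cs i) ∈ nhds (0 : ℝ) :=
      hcont.continuousAt.preimage_mem_nhds (((hcones i).1.1).mem_nhds h0)
    obtain ⟨δ, hδ, hball⟩ := Metric.mem_nhds_iff.1 hpre
    refine ⟨δ / 2, by positivity, ?_⟩
    have hmem : x + (δ / 2) • (x - x₀) ∈ Cs i := by
      apply hball
      simp only [Metric.mem_ball, Real.dist_eq, sub_zero]
      rw [abs_of_pos (by positivity)]
      linarith
    refine ⟨x + (δ / 2) • (x - x₀), hmem, ?_⟩
    push_cast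
    ring_nf
  have hDind : ∀ i, ¬ IsDecomposableCone ((W i).subtype ⁻¹' (D i)) := by
    intro i
    have h : (W i).subtype ⁻¹' (D i) = Cs i :=
      Set.preimage_image_eq (Cs i) Subtype.val_injective
    rw [h]
    exact (hcones i).2
  have hCD : C = {v | ∃ f : Fin s → V, (∀ i, f i ∈ D i) ∧ v = ∑ i, f i} := by
    rw [hdecomp]
    ext v
    constructor
    · rintro ⟨f, hf, rfl⟩
      exact ⟨fun i => (f i : V), fun i => ⟨f i, hf i, rfl⟩, rfl⟩
    · rintro ⟨f, hf, rfl⟩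
      choose x hx hxe using hf
      exact ⟨x, hx, Finset.sum_congr rfl fun i _ => (hxe i).symm⟩
  obtain ⟨π, hπ1, hπ2, hπ3⟩ := exists_projs W hindep hsup
  have hπD := comp_mem π hπ2 hDW hCD
  have hDeqπ : ∀ i, D i = π i '' C := by
    intro i
    apply Set.Subset.antisymm
    · intro d hd
      set tt : V := ∑ k ∈ Finset.univ.erase i, (hDne k).some with htt
      have hcC : d + tt ∈ C := by
        rw [hCD]
        refine ⟨fun k => if h : k = i then d else (hDne k).some, fun k => ?_, ?_⟩
        · by_cases h : k = i
          · subst h; simpa using hd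
          · simpa [h] using (hDne k).some_mem
        · rw [← Finset.add_sum_erase Finset.univ _ (Finset.mem_univ i), dif_pos rfl]
          congr 1
          exact Finset.sum_congr rfl fun k hk => by rw [dif_neg (Finset.mem_erase.1 hk).1]
      refine ⟨d + tt, hcC, ?_⟩
      rw [map_add]
      have h1 : π i d = d := by rw [hπ2 i i d (hDW i hd), if_pos rfl]
      have h2 : π i tt = 0 := by
        rw [htt, map_sum]
        refine Finset.sum_eq_zero fun k hk => ?_
        rw [hπ2 i k _ (hDW k (hDne k).some_mem), if_neg (Ne.symm (Finset.mem_erase.1 hk).1)]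
      rw [h1, h2, add_zero]
    · rintro x ⟨c, hc, rfl⟩
      exact hπD c hc i
  -- key classification of images of the W i under elements of Aut C
  have key : ∀ g : V ≃ₗ[ℝ] V, g '' C = C → ∀ j,
      Submodule.map (g : V →ₗ[ℝ] V) (W j) ∈ insert ⊥ (Set.range W) := by
    intro g hg j
    by_cases hWj : W j = ⊥
    · left
      rw [hWj]
      exact Submodule.map_bot _
    right
    set U : Fin s → Submodule ℝ V := fun k => Submodule.map (g : V →ₗ[ℝ] V) (W k) with hUdef
    set E : Fin s → Set V := fun k => g '' D k with hEdef
    have hUind : iSupIndep U := by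
      have h := hindep.map_orderIso (Submodule.orderIsoMapComap g)
      exact h
    have hUsup : (⨆ k, U k) = ⊤ := by
      rw [hUdef]
      simp only []
      rw [← Submodule.map_iSup, hsup, Submodule.map_top, LinearMap.range_eq_top]
      exact g.surjective
    have hEU : ∀ k, E k ⊆ (U k : Set V) := by
      rintro k x ⟨d, hd, rfl⟩
      exact ⟨d, hDW k hd, rfl⟩
    have hEne : ∀ k, (E k).Nonempty := fun k => (hDne k).image _
    have hEconv : ∀ k, Convex ℝ (E k) := fun k => (hDconv k).linear_image (g : V →ₗ[ℝ] V)
    have hEcone : ∀ k, ∀ r : ℝ, 0 < r → ∀ v ∈ E k, r • v ∈ E k := by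
      rintro k r hr v ⟨d, hd, rfl⟩
      exact ⟨r • d, hDcone k r hr d hd, map_smul _ _ _⟩
    have hEopen : ∀ k, ∀ d ∈ E k, ∀ d₀ ∈ E k, ∃ ε : ℝ, 0 < ε ∧ d + ε • (d - d₀) ∈ E k := by
      rintro k d ⟨e, he, rfl⟩ d₀ ⟨e₀, he₀, rfl⟩
      obtain ⟨ε, hε, hmem⟩ := hDopen k e he e₀ he₀
      refine ⟨ε, hε, ⟨e + ε • (e - e₀), hmem, ?_⟩⟩
      rw [map_add, map_smul, map_sub]
    have hCE : C = {v | ∃ f : Fin s → V, (∀ k, f k ∈ E k) ∧ v = ∑ k, f k} := by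
      ext v
      constructor
      · intro hv
        have hv' : v ∈ g '' C := by rw [hg]; exact hv
        obtain ⟨c, hc, rfl⟩ := hv'
        rw [hCD] at hc
        obtain ⟨f, hf, rfl⟩ := hc
        exact ⟨fun k => g (f k), fun k => ⟨f k, hf k, rfl⟩, by rw [map_sum]⟩
      · rintro ⟨f, hf, rfl⟩
        choose x hx hxe using hf
        have hsum : ∑ k, f k = g (∑ k, x k) := by
          rw [map_sum]
          exact Finset.sum_congr rfl fun k _ => (hxe k).symm
        rw [hsum, ← hg]
        refine ⟨∑ k, x k, ?_, rfl⟩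
        rw [hCD]
        exact ⟨x, hx, rfl⟩
    have hEind : ∀ k, ¬ IsDecomposableCone ((U k).subtype ⁻¹' (E k)) := by
      intro k hdec
      apply hDind k
      refine IsDecomposableCone.of_image (g.submoduleMap (W k)) ?_
      have hseteq : (g.submoduleMap (W k)) '' ((W k).subtype ⁻¹' D k)
          = (U k).subtype ⁻¹' (E k) := by
        ext x
        constructor
        · rintro ⟨y, hy, rfl⟩
          exact ⟨(y : V), hy, rfl⟩
        · intro hx
          obtain ⟨d, hd, hdx⟩ := hx
          refine ⟨⟨d, hDW k hd⟩, hd, ?_⟩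
          exact Subtype.ext hdx
      rw [hseteq]
      exact hdec
    have hUj : U j ≠ ⊥ := by
      intro h0
      apply hWj
      rw [eq_bot_iff]
      intro x hx
      have : g x ∈ U j := ⟨x, hx, rfl⟩
      rw [h0, Submodule.mem_bot] at this
      rw [Submodule.mem_bot]
      simpa using congrArg g.symm this
    obtain ⟨k, hk⟩ := core C hC hspan U W hUind hUsup hindep hsup E D hEU hDW hEne hDne
      hEconv hEcone hDcone hEopen hEind hCE hCD j hUj
    have hWk : W k ≠ ⊥ := by
      intro h0
      rw [h0, le_bot_iff] at hk
      exact hUj hk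
    obtain ⟨j', hj'⟩ := core C hC hspan W U hindep hsup hUind hUsup D E hDW hEU hDne hEne
      hDconv hDcone hEcone hDopen hDind hCD hCE k hWk
    have hjj' : j' = j := by
      by_contra hne
      apply hUj
      rw [← le_bot_iff]
      have h1 : U j ≤ U j' := hk.trans hj'
      have h2 : U j ≤ ⨆ l, ⨆ (_ : l ≠ j'), U l :=
        le_iSup_of_le j (le_iSup_of_le (fun h => hne h.symm) le_rfl)
      exact le_trans (le_inf h1 h2) (hUind j').le_bot
    rw [hjj'] at hj'
    exact ⟨k, le_antisymm hj' hk⟩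
  -- with each W i preserved, each D i is preserved
  have stabD : ∀ g : V ≃ₗ[ℝ] V, g '' C = C →
      (∀ k, Submodule.map (g : V →ₗ[ℝ] V) (W k) = W k) → ∀ i, g '' D i = D i := by
    intro g hg hgW i
    have hgWmem : ∀ k, ∀ w ∈ W k, g w ∈ W k := by
      intro k w hw
      rw [← hgW k]
      exact ⟨w, hw, rfl⟩
    have hcomm : ∀ v, π i (g v) = g (π i v) := by
      intro v
      conv_lhs => rw [← hπ3 v]
      rw [map_sum, map_sum, Finset.sum_eq_single i]
      · rw [hπ2 i i _ (hgWmem i _ (hπ1 i v)), if_pos rfl]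
      · intro k _ hk
        rw [hπ2 i k _ (hgWmem k _ (hπ1 k v)), if_neg (Ne.symm hk)]
      · simp
    calc g '' (D i) = g '' (π i '' C) := by rw [← hDeqπ i]
      _ = (fun c => g (π i c)) '' C := Set.image_image _ _ _
      _ = (fun c => π i (g c)) '' C := Set.image_congr' (fun c => (hcomm c).symm)
      _ = π i '' (g '' C) := (Set.image_image _ _ _).symm
      _ = π i '' C := by rw [hg]
      _ = D i := (hDeqπ i).symm
  set T : Set (Submodule ℝ V) := insert ⊥ (Set.range W) with hTdef
  have hTfin : T.Finite := (Set.finite_range W).insert ⊥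
  haveI : Finite T := hTfin.to_subtype
  have hmemG : ∀ g : MulAction.stabilizer (V ≃ₗ[ℝ] V) C, ((g : V ≃ₗ[ℝ] V)) '' C = C :=
    fun g => g.2
  set K := ((MulAction.stabilizer (V ≃ₗ[ℝ] V) C) ⊓
        ⨅ i, (MulAction.stabilizer (V ≃ₗ[ℝ] V) ((W i : Set V)) ⊓
              MulAction.stabilizer (V ≃ₗ[ℝ] V) (D i))).subgroupOf
      (MulAction.stabilizer (V ≃ₗ[ℝ] V) C) with hKdef
  let Φ : MulAction.stabilizer (V ≃ₗ[ℝ] V) C → (Fin s → T) :=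
    fun g i => ⟨Submodule.map ((g : V ≃ₗ[ℝ] V) : V →ₗ[ℝ] V) (W i), key _ (hmemG g) i⟩
  have hmemK : ∀ x : ↥(MulAction.stabilizer (V ≃ₗ[ℝ] V) C),
      x ∈ K ↔ ∀ i, Submodule.map ((x : V ≃ₗ[ℝ] V) : V →ₗ[ℝ] V) (W i) = W i := by
    intro x
    rw [hKdef, Subgroup.mem_subgroupOf]
    constructor
    · intro hx i
      obtain ⟨h1, h2⟩ := Subgroup.mem_inf.1 hx
      have h3 := (Subgroup.mem_inf.1 (Subgroup.mem_iInf.1 h2 i)).1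
      have h4 : (↑x : V ≃ₗ[ℝ] V) '' ((W i : Set V)) = (W i : Set V) := h3
      apply SetLike.coe_injective
      rw [Submodule.map_coe]
      exact h4
    · intro hx
      refine Subgroup.mem_inf.2 ⟨x.2, Subgroup.mem_iInf.2 fun i => Subgroup.mem_inf.2
        ⟨?_, ?_⟩⟩
      · rw [MulAction.mem_stabilizer_iff]
        have h5 : (↑(Submodule.map ((↑x : V ≃ₗ[ℝ] V) : V →ₗ[ℝ] V) (W i)) : Set V)
            = ((W i : Set V)) := congrArg _ (hx i)
        rw [Submodule.map_coe] at h5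
        exact h5
      · rw [MulAction.mem_stabilizer_iff]
        exact stabD _ (hmemG x) hx i
  have hΦeq : ∀ a b : ↥(MulAction.stabilizer (V ≃ₗ[ℝ] V) C),
      Φ a = Φ b ↔ a⁻¹ * b ∈ K := by
    intro a b
    rw [hmemK]
    have hab : ((a⁻¹ * b : ↥(MulAction.stabilizer (V ≃ₗ[ℝ] V) C)) : V ≃ₗ[ℝ] V)
        = (↑a)⁻¹ * ↑b := rfl
    constructor
    · intro h i
      have hi : Submodule.map ((↑a : V ≃ₗ[ℝ] V) : V →ₗ[ℝ] V) (W i)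
          = Submodule.map ((↑b : V ≃ₗ[ℝ] V) : V →ₗ[ℝ] V) (W i) :=
        congrArg (fun f => ((f i : T) : Submodule ℝ V)) h
      rw [hab, map_mul_submodule, ← hi, ← map_mul_submodule, inv_mul_cancel,
        map_one_submodule]
    · intro h
      funext i
      apply Subtype.ext
      show Submodule.map ((↑a : V ≃ₗ[ℝ] V) : V →ₗ[ℝ] V) (W i)
          = Submodule.map ((↑b : V ≃ₗ[ℝ] V) : V →ₗ[ℝ] V) (W i)
      have hb2 : (↑b : V ≃ₗ[ℝ] V)
          = ↑a * ((a⁻¹ * b : ↥(MulAction.stabilizer (V ≃ₗ[ℝ] V) C)) : V ≃ₗ[ℝ] V) := by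
        rw [hab]; group
      calc Submodule.map ((↑a : V ≃ₗ[ℝ] V) : V →ₗ[ℝ] V) (W i)
          = Submodule.map ((↑a : V ≃ₗ[ℝ] V) : V →ₗ[ℝ] V)
            (Submodule.map (((a⁻¹ * b : ↥(MulAction.stabilizer (V ≃ₗ[ℝ] V) C)) : V ≃ₗ[ℝ] V)
              : V →ₗ[ℝ] V) (W i)) := by rw [h i]
        _ = Submodule.map ((((↑a : V ≃ₗ[ℝ] V) *
              ((a⁻¹ * b : ↥(MulAction.stabilizer (V ≃ₗ[ℝ] V) C)) : V ≃ₗ[ℝ] V)) : V ≃ₗ[ℝ] V)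
              : V →ₗ[ℝ] V) (W i) := (map_mul_submodule _ _ _).symm
        _ = Submodule.map ((↑b : V ≃ₗ[ℝ] V) : V →ₗ[ℝ] V) (W i) := by rw [← hb2]
  haveI : Finite ((↥(MulAction.stabilizer (V ≃ₗ[ℝ] V) C)) ⧸ K) := by
    refine Finite.of_injective
      (fun q => Quotient.liftOn' q Φ (fun a b hab =>
        (hΦeq a b).2 (QuotientGroup.leftRel_apply.1 hab))) ?_
    intro q1 q2
    refine Quotient.inductionOn₂' q1 q2 (fun a b h => ?_)
    exact Quotient.sound' (QuotientGroup.leftRel_apply.2 ((hΦeq a b).1 h))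
  exact Subgroup.finiteIndex_of_finite_quotient
end
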